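/- arXiv:1804.05011 — 5 statements merged into one kernel-verified Lean document; each statement's English description precedes it below -/
import Mathlib

section
/- Tayloring bound for performance evaluation (Theorem 1, single-policy/linear case, on the state space ℤ^d): Let d ≥ 1, α ∈ (0,1), β ∈ (0,1], and let 𝔧 ≥ 1 be a real number. Let P be a stochastic matrix on ℤ^d with jumps bounded by 𝔧, with drift μ and diffusion matrix σ². Let r : ℤ^d → ℝ and let Γ > 0 and q ∈ ℕ be such that |r(x)| ≤ Γ(1 + ‖x‖^q) for all x ∈ ℤ^d; define V(x) := E_x[Σ_{t=0}^∞ α^t r(X_t)] (this series converges absolutely because the chain has jumps bounded by 𝔧). Let V̂ : ℝ^d → ℝ be twice continuously differentiable with |V̂(x)| ≤ Γ(1 + ‖x‖^q) for all x ∈ ℝ^d, and suppose that for every x ∈ ℤ^d, 0 = r(x) + α(μ(x)·DV̂(x) + (1/2)·trace(σ²(x)·D²V̂(x))) − (1−α)·V̂(x). Then for every x ∈ ℤ^d, |V̂(x) − V(x)| ≤ 𝔧^{2+β} · E_x[Σ_{t=0}^∞ α^t [D²V̂]_{β, B̄(X_t,𝔧)}], where B̄(z,𝔧) is the closed Euclidean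 ball of radius 𝔧 centered at z and the right-hand side is interpreted as a value in [0,+∞]. -/
open scoped ENNReal BigOperators

noncomputable section

/-- `ℤ^d` represented as functions `Fin d → ℤ`. -/
abbrev Zd (d : ℕ) := Fin d → ℤ

/-- The embedding of `ℤ^d` into Euclidean `ℝ^d`. -/
def zToR {d : ℕ} (x : Zd d) : EuclideanSpace ℝ (Fin d) := WithLp.toLp 2 (fun i => (x i : ℝ))

/-- `t`-step transition probabilities of the Markov chain with one-step
transition matrix `P`. -/
def mstep {d : ℕ} (P : Zd d → Zd d → ℝ) : ℕ → Zd d → Zd d → ℝ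
  | 0 => fun x y => if y = x then 1 else 0
  | n + 1 => fun x y => ∑' z : Zd d, mstep P n x z * P z y

/-- Entry `(i, j)` of the Hessian of `f` at `x`. -/
def hessianEntry {d : ℕ} (f : EuclideanSpace ℝ (Fin d) → ℝ)
    (x : EuclideanSpace ℝ (Fin d)) (i j : Fin d) : ℝ :=
  iteratedFDeriv ℝ 2 f x ![EuclideanSpace.single i 1, EuclideanSpace.single j 1]

/-- The Hölder seminorm `[D²f]_{β,Ω}` of the Hessian of `f` over `Ω`
(operator norm on second derivatives), valued in `[0,∞]`. -/
def hessHolder {d : ℕ} (β : ℝ) (f : EuclideanSpace ℝ (Fin d) → ℝ)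
    (Ω : Set (EuclideanSpace ℝ (Fin d))) : ℝ≥0∞ :=
  ⨆ (y : Ω) (z : Ω) (_ : (y : EuclideanSpace ℝ (Fin d)) ≠ (z : EuclideanSpace ℝ (Fin d))),
    ENNReal.ofReal
      (‖iteratedFDeriv ℝ 2 f (y : EuclideanSpace ℝ (Fin d)) -
          iteratedFDeriv ℝ 2 f (z : EuclideanSpace ℝ (Fin d))‖ /
        ‖(y : EuclideanSpace ℝ (Fin d)) - (z : EuclideanSpace ℝ (Fin d))‖ ^ β)


/-!
Put `e = V̂ - V` on the lattice. Expanding `V̂` to second order along each jump, the averaged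
first- and second-order terms are exactly the drift and diffusion terms, so the equation
satisfied by `V̂` together with the Bellman equation `V = r + α P V` gives `e = α P e - α P R`,
where the Taylor remainder `R` at `y` is at most `𝔧^{2+β} [D²V̂]_{β, B̄(y, 𝔧)}` since jumps have
length at most `𝔧`. Iterating `T` times,
`|e x| ≤ α^T (P^T |e|) x + 𝔧^{2+β} ∑_{t<T} α^t (P^t H) x`, and the first term vanishes as
`T → ∞` because `e` grows polynomially while the chain moves at most `𝔧` per step. Working in
`[0, ∞]` makes the points where the Hölder seminorm is infinite harmless.
-/

open Function Set Filter Topology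

section FiniteSupport

variable {ι κ : Type*}

theorem tsum_mul_eq_sum_toFinset {a : ι → ℝ} (ha : (support a).Finite) (g : ι → ℝ) :
    ∑' i, a i * g i = ∑ i ∈ ha.toFinset, a i * g i :=
  tsum_eq_sum fun i hi => by
    rw [Set.Finite.mem_toFinset, notMem_support] at hi
    rw [hi, zero_mul]

theorem summable_mul_of_finite_support {a : ι → ℝ} (ha : (support a).Finite) (g : ι → ℝ) :
    Summable fun i => a i * g i :=
  summable_of_hasFiniteSupport <| ha.subset <| support_mul_subset_left a g

theorem tsum_tsum_mul_mul_assoc {a : ι → ℝ} {b : ι → κ → ℝ} (c : κ → ℝ)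
    (ha : (support a).Finite) (hb : ∀ i, (support (b i)).Finite) :
    ∑' k, (∑' i, a i * b i k) * c k = ∑' i, a i * ∑' k, b i k * c k := by
  simp_rw [tsum_mul_eq_sum_toFinset ha, Finset.sum_mul, ← tsum_mul_left, mul_assoc]
  exact Summable.tsum_finsetSum fun i _ => (summable_mul_of_finite_support (hb i) c).mul_left _

theorem abs_tsum_mul_le_of_hasSum_one {a f : ι → ℝ} {B : ℝ} (ha0 : ∀ i, 0 ≤ a i)
    (ha1 : HasSum a 1) (hB : ∀ i, a i ≠ 0 → |f i| ≤ B) :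
    |∑' i, a i * f i| ≤ B := by
  have hle : ∀ i, ‖a i * f i‖ ≤ a i * B := fun i => by
    rw [norm_mul, Real.norm_of_nonneg (ha0 i)]
    by_cases hi : a i = 0
    · simp [hi]
    · exact mul_le_mul_of_nonneg_left (hB i hi) (ha0 i)
  simpa using tsum_of_norm_bounded (ha1.mul_right B) hle

theorem tsum_ofReal_mul_ofReal {a f : ι → ℝ} (ha0 : ∀ i, 0 ≤ a i) (hf0 : ∀ i, 0 ≤ f i)
    (ha : (support a).Finite) :
    ∑' i, ENNReal.ofReal (a i) * ENNReal.ofReal (f i) = ENNReal.ofReal (∑' i, a i * f i) := by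
  rw [ENNReal.ofReal_tsum_of_nonneg (fun i => mul_nonneg (ha0 i) (hf0 i))
    (summable_mul_of_finite_support ha f)]
  simp_rw [ENNReal.ofReal_mul (ha0 _)]

theorem ofReal_abs_tsum_mul_le {a : ι → ℝ} (ha0 : ∀ i, 0 ≤ a i) (ha : (support a).Finite)
    (f : ι → ℝ) :
    ENNReal.ofReal |∑' i, a i * f i| ≤ ∑' i, ENNReal.ofReal (a i) * ENNReal.ofReal |f i| := by
  rw [tsum_ofReal_mul_ofReal ha0 (fun i => abs_nonneg _) ha]
  refine ENNReal.ofReal_le_ofReal ?_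
  rw [tsum_mul_eq_sum_toFinset ha, tsum_mul_eq_sum_toFinset ha]
  refine (Finset.abs_sum_le_sum_abs _ _).trans_eq (Finset.sum_congr rfl fun i _ => ?_)
  rw [abs_mul, abs_of_nonneg (ha0 i)]

end FiniteSupport

theorem le_tsum_pow_mul_of_le_mul_add {a b : ℕ → ℝ≥0∞} {c : ℝ≥0∞}
    (h : ∀ t, a t ≤ c * a (t + 1) + b t) (hlim : Tendsto (fun t => c ^ t * a t) atTop (𝓝 0)) :
    a 0 ≤ ∑' t, c ^ t * b t := by
  have hpartial : ∀ T, a 0 ≤ c ^ T * a T + ∑ t ∈ Finset.range T, c ^ t * b t := by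
    intro T
    induction T with
    | zero => simp
    | succ T ih =>
      calc a 0 ≤ c ^ T * a T + ∑ t ∈ Finset.range T, c ^ t * b t := ih
        _ ≤ c ^ T * (c * a (T + 1) + b T) + ∑ t ∈ Finset.range T, c ^ t * b t := by
            gcongr; exact h T
        _ = _ := by rw [Finset.sum_range_succ, mul_add, pow_succ, mul_assoc]; ring
  simpa using ge_of_tendsto' (hlim.add_const (∑' t, c ^ t * b t)) fun T =>
    (hpartial T).trans (by gcongr; exact ENNReal.sum_le_tsum _)

section MultiStep

variable {d : ℕ} {P : Zd d → Zd d → ℝ}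

theorem exists_ne_zero_of_mstep_succ_ne_zero {t : ℕ} {x y : Zd d}
    (h : mstep P (t + 1) x y ≠ 0) : ∃ z, mstep P t x z ≠ 0 ∧ P z y ≠ 0 := by
  by_contra! H
  refine h ((tsum_congr fun z => ?_).trans tsum_zero)
  by_cases hz : mstep P t x z = 0
  · rw [hz, zero_mul]
  · rw [H z hz, mul_zero]

theorem mstep_nonneg (hP0 : ∀ x y, 0 ≤ P x y) (t : ℕ) (x y : Zd d) : 0 ≤ mstep P t x y := by
  induction t generalizing y with
  | zero => simp only [mstep]; positivity
  | succ t ih => exact tsum_nonneg fun z => mul_nonneg (ih z) (hP0 z y)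

theorem tsum_ofReal_mstep_zero_mul (x : Zd d) (g : Zd d → ℝ≥0∞) :
    ∑' y, ENNReal.ofReal (mstep P 0 x y) * g y = g x := by
  rw [tsum_eq_single x fun y hy => by simp [mstep, hy]]
  simp [mstep]

variable (hP : ∀ x, (support (P x)).Finite)
include hP

theorem finite_support_mstep (t : ℕ) (x : Zd d) : (support (mstep P t x)).Finite := by
  induction t with
  | zero => exact (Set.finite_singleton x).subset fun y hy => by simpa [mstep] using hy
  | succ t ih =>
    refine (ih.biUnion fun z _ => hP z).subset fun y hy => ?_
    obtain ⟨z, hz, hzy⟩ := exists_ne_zero_of_mstep_succ_ne_zero hy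
    exact Set.mem_biUnion hz hzy

theorem mstep_succ' (t : ℕ) (x y : Zd d) : mstep P (t + 1) x y = ∑' z, P x z * mstep P t z y := by
  induction t generalizing y with
  | zero =>
    rw [tsum_eq_single y fun z hz => by simp [mstep, Ne.symm hz]]
    simp [mstep, tsum_ite_eq]
  | succ t ih =>
    calc mstep P (t + 2) x y = ∑' w, (∑' z, P x z * mstep P t z w) * P w y := by
          simp only [mstep] at ih ⊢; simp_rw [ih]
      _ = _ := tsum_tsum_mul_mul_assoc _ (hP x) (finite_support_mstep hP t)

theorem tsum_mstep_succ_mul (t : ℕ) (x : Zd d) (f : Zd d → ℝ) :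
    ∑' y, mstep P (t + 1) x y * f y = ∑' z, mstep P t x z * ∑' y, P z y * f y :=
  tsum_tsum_mul_mul_assoc f (finite_support_mstep hP t x) hP

theorem tsum_mstep_succ_mul' (t : ℕ) (x : Zd d) (f : Zd d → ℝ) :
    ∑' y, mstep P (t + 1) x y * f y = ∑' z, P x z * ∑' y, mstep P t z y * f y := by
  simp_rw [mstep_succ' hP]
  exact tsum_tsum_mul_mul_assoc f (hP x) (finite_support_mstep hP t)

theorem hasSum_mstep (hPsum : ∀ x, HasSum (P x) 1) (t : ℕ) (x : Zd d) :
    HasSum (mstep P t x) 1 := by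
  refine (summable_of_hasFiniteSupport (finite_support_mstep hP t x)).hasSum_iff.mpr ?_
  induction t generalizing x with
  | zero => simp [mstep, tsum_ite_eq]
  | succ t ih =>
    have := tsum_mstep_succ_mul hP t x 1
    simp only [Pi.one_apply, mul_one, (hPsum _).tsum_eq] at this
    rw [this, ih]

theorem tsum_ofReal_mstep_succ_mul (hP0 : ∀ x y, 0 ≤ P x y) (t : ℕ) (x : Zd d)
    (g : Zd d → ℝ≥0∞) :
    ∑' z, ENNReal.ofReal (mstep P (t + 1) x z) * g z =
      ∑' y, ENNReal.ofReal (mstep P t x y) * ∑' z, ENNReal.ofReal (P y z) * g z := by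
  have hstep : ∀ z, ENNReal.ofReal (mstep P (t + 1) x z) =
      ∑' y, ENNReal.ofReal (mstep P t x y) * ENNReal.ofReal (P y z) := fun z =>
    (tsum_ofReal_mul_ofReal (mstep_nonneg hP0 t x) (fun y => hP0 y z)
      (finite_support_mstep hP t x)).symm
  simp_rw [hstep, ← ENNReal.tsum_mul_right, ← ENNReal.tsum_mul_left, mul_assoc]
  exact ENNReal.tsum_comm

theorem tsum_ofReal_mstep_mul_le_of_le (hP0 : ∀ x y, 0 ≤ P x y) {E G : Zd d → ℝ≥0∞}
    {c : ℝ≥0∞} (hE : ∀ y, E y ≤ c * ∑' z, ENNReal.ofReal (P y z) * E z + G y) (t : ℕ)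
    (x : Zd d) :
    ∑' y, ENNReal.ofReal (mstep P t x y) * E y ≤
      c * ∑' y, ENNReal.ofReal (mstep P (t + 1) x y) * E y +
        ∑' y, ENNReal.ofReal (mstep P t x y) * G y := by
  rw [tsum_ofReal_mstep_succ_mul hP hP0, ← ENNReal.tsum_mul_left, ← ENNReal.tsum_add]
  refine ENNReal.tsum_le_tsum fun y => ?_
  calc ENNReal.ofReal (mstep P t x y) * E y
      ≤ ENNReal.ofReal (mstep P t x y) * (c * ∑' z, ENNReal.ofReal (P y z) * E z + G y) := by
        gcongr; exact hE y
    _ = _ := by ring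

end MultiStep

def discountedValue {d : ℕ} (P : Zd d → Zd d → ℝ) (α : ℝ) (f : Zd d → ℝ) (x : Zd d) : ℝ :=
  ∑' t : ℕ, α ^ t * ∑' y, mstep P t x y * f y

theorem discountedValue_eq_add_mul_tsum {d : ℕ} {P : Zd d → Zd d → ℝ}
    (hP : ∀ x, (support (P x)).Finite) {α : ℝ}
    {f : Zd d → ℝ} (hsum : ∀ x, Summable fun t : ℕ => α ^ t * ∑' y, mstep P t x y * f y)
    (x : Zd d) :
    discountedValue P α f x = f x + α * ∑' y, P x y * discountedValue P α f y := by
  have hstart : ∑' y, mstep P 0 x y * f y = f x := by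
    rw [tsum_eq_single x fun y hy => by simp [mstep, hy]]
    simp [mstep]
  rw [discountedValue, (hsum x).tsum_eq_zero_add, pow_zero, one_mul, hstart,
    tsum_mul_eq_sum_toFinset (hP x), Finset.mul_sum]
  congr 1
  calc ∑' t : ℕ, α ^ (t + 1) * ∑' y, mstep P (t + 1) x y * f y
      = ∑' t : ℕ, ∑ z ∈ (hP x).toFinset, α * (P x z * (α ^ t * ∑' y, mstep P t z y * f y)) :=
        tsum_congr fun t => by
          rw [tsum_mstep_succ_mul' hP, tsum_mul_eq_sum_toFinset (hP x), Finset.mul_sum]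
          exact Finset.sum_congr rfl fun z _ => by ring
    _ = ∑ z ∈ (hP x).toFinset, ∑' t : ℕ, α * (P x z * (α ^ t * ∑' y, mstep P t z y * f y)) :=
        Summable.tsum_finsetSum fun z _ => ((hsum z).mul_left _).mul_left _
    _ = _ := Finset.sum_congr rfl fun z _ => by rw [tsum_mul_left, tsum_mul_left, discountedValue]

theorem finite_setOf_norm_zToR_sub_le {d : ℕ} (x : Zd d) (R : ℝ) :
    {y : Zd d | ‖zToR y - zToR x‖ ≤ R}.Finite := by
  refine (isCompact_closedBall x R).finite_of_discrete.subset fun y hy => ?_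
  refine (dist_pi_le_iff ((norm_nonneg _).trans hy)).mpr fun i => ?_
  calc dist (y i) (x i) = |(zToR y - zToR x) i| := by simp [zToR, Int.dist_eq]
    _ ≤ ‖zToR y - zToR x‖ := by simpa using PiLp.norm_apply_le (zToR y - zToR x) i
    _ ≤ R := hy

theorem mul_one_add_pow_le {Γ a : ℝ} (hΓ : 0 ≤ Γ) (ha : 0 ≤ a) (q : ℕ) :
    Γ * (1 + a ^ q) ≤ 2 * Γ * (1 + a) ^ q := by
  have h1 : 1 ≤ (1 + a) ^ q := one_le_pow₀ (by linarith)
  have h2 : a ^ q ≤ (1 + a) ^ q := pow_le_pow_left₀ ha (by linarith) q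
  nlinarith

theorem summable_pow_mul_one_add_mul_pow {α j : ℝ} (hα0 : 0 < α) (hα1 : α < 1) (hj : 0 ≤ j)
    (q : ℕ) : Summable fun t : ℕ => α ^ t * (1 + t * j) ^ q := by
  have hshift : Summable fun t : ℕ => ((t + 1 : ℕ) : ℝ) ^ q * α ^ (t + 1) :=
    (summable_nat_add_iff (f := fun n : ℕ => (n : ℝ) ^ q * α ^ n) 1).mpr <|
      summable_pow_mul_geometric_of_norm_lt_one q (by rwa [Real.norm_of_nonneg hα0.le])
  refine Summable.of_nonneg_of_le (fun t => by positivity) (fun t => ?_)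
    (hshift.mul_left ((1 + j) ^ q * α⁻¹))
  have h1 : 1 + t * j ≤ (1 + j) * (t + 1) := by
    nlinarith [mul_nonneg (t.cast_nonneg : (0 : ℝ) ≤ t) hj]
  calc α ^ t * (1 + t * j) ^ q ≤ α ^ t * ((1 + j) * (t + 1)) ^ q := by gcongr
    _ = (1 + j) ^ q * α⁻¹ * (((t + 1 : ℕ) : ℝ) ^ q * α ^ (t + 1)) := by
      rw [mul_pow, pow_succ]; push_cast; field_simp

structure IsStochasticWithJumpBound {d : ℕ} (P : Zd d → Zd d → ℝ) (jmp : ℝ) : Prop where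
  nonneg : ∀ x y, 0 ≤ P x y
  hasSum_one : ∀ x, HasSum (P x) 1
  eq_zero_of_lt_norm : ∀ x y, jmp < ‖zToR y - zToR x‖ → P x y = 0

namespace IsStochasticWithJumpBound

variable {d : ℕ} {P : Zd d → Zd d → ℝ} {jmp α C : ℝ} {f : Zd d → ℝ} {q : ℕ}

theorem norm_sub_le (hP : IsStochasticWithJumpBound P jmp) {x y : Zd d} (h : P x y ≠ 0) :
    ‖zToR y - zToR x‖ ≤ jmp :=
  not_lt.mp (mt (hP.eq_zero_of_lt_norm x y) h)

theorem finite_support (hP : IsStochasticWithJumpBound P jmp) (x : Zd d) :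
    (support (P x)).Finite :=
  (finite_setOf_norm_zToR_sub_le x jmp).subset fun _ => hP.norm_sub_le

theorem jmp_nonneg (hP : IsStochasticWithJumpBound P jmp) : 0 ≤ jmp := by
  obtain ⟨y, hy⟩ : ∃ y, P 0 y ≠ 0 := by
    by_contra! h
    exact one_ne_zero ((hP.hasSum_one 0).unique (by simp [funext h]))
  exact (norm_nonneg _).trans (hP.norm_sub_le hy)

theorem norm_sub_le_of_mstep_ne_zero (hP : IsStochasticWithJumpBound P jmp) {t : ℕ}
    {x y : Zd d} (h : mstep P t x y ≠ 0) : ‖zToR y - zToR x‖ ≤ t * jmp := by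
  induction t generalizing y with
  | zero =>
    obtain rfl : y = x := by by_contra hyx; simp [mstep, hyx] at h
    simp
  | succ t ih =>
    obtain ⟨z, hz, hzy⟩ := exists_ne_zero_of_mstep_succ_ne_zero h
    calc ‖zToR y - zToR x‖ ≤ ‖zToR y - zToR z‖ + ‖zToR z - zToR x‖ :=
          norm_sub_le_norm_sub_add_norm_sub _ _ _
      _ ≤ jmp + t * jmp := add_le_add (hP.norm_sub_le hzy) (ih hz)
      _ = (t + 1 : ℕ) * jmp := by push_cast; ring

theorem abs_tsum_mstep_mul_le (hP : IsStochasticWithJumpBound P jmp) (hC : 0 ≤ C)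
    (hf : ∀ y, |f y| ≤ C * (1 + ‖zToR y‖) ^ q) (t : ℕ) (x : Zd d) :
    |∑' y, mstep P t x y * f y| ≤ C * (1 + ‖zToR x‖) ^ q * (1 + t * jmp) ^ q := by
  refine abs_tsum_mul_le_of_hasSum_one (mstep_nonneg hP.nonneg t x)
    (hasSum_mstep hP.finite_support hP.hasSum_one t x) fun y hy => (hf y).trans ?_
  have hy : ‖zToR y‖ ≤ ‖zToR x‖ + t * jmp := by
    have := hP.norm_sub_le_of_mstep_ne_zero hy
    have := norm_le_norm_add_norm_sub' (zToR y) (zToR x)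
    linarith
  have htj : 0 ≤ t * jmp := mul_nonneg t.cast_nonneg hP.jmp_nonneg
  rw [mul_assoc, ← mul_pow]
  gcongr
  nlinarith [mul_nonneg (norm_nonneg (zToR x)) htj]

theorem norm_pow_mul_tsum_mstep_mul_le (hP : IsStochasticWithJumpBound P jmp) (hα : 0 ≤ α)
    (hC : 0 ≤ C) (hf : ∀ y, |f y| ≤ C * (1 + ‖zToR y‖) ^ q) (t : ℕ) (x : Zd d) :
    ‖α ^ t * ∑' y, mstep P t x y * f y‖ ≤
      C * (1 + ‖zToR x‖) ^ q * (α ^ t * (1 + t * jmp) ^ q) := by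
  rw [norm_mul, Real.norm_eq_abs, Real.norm_eq_abs, abs_pow, abs_of_nonneg hα]
  calc α ^ t * |∑' y, mstep P t x y * f y|
      ≤ α ^ t * (C * (1 + ‖zToR x‖) ^ q * (1 + t * jmp) ^ q) := by
        gcongr; exact hP.abs_tsum_mstep_mul_le hC hf t x
    _ = _ := by ring

theorem summable_pow_mul_tsum_mstep_mul (hP : IsStochasticWithJumpBound P jmp) (hα0 : 0 < α)
    (hα1 : α < 1) (hC : 0 ≤ C) (hf : ∀ y, |f y| ≤ C * (1 + ‖zToR y‖) ^ q) (x : Zd d) :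
    Summable fun t : ℕ => α ^ t * ∑' y, mstep P t x y * f y :=
  Summable.of_norm_bounded
    ((summable_pow_mul_one_add_mul_pow hα0 hα1 hP.jmp_nonneg q).mul_left _)
    (hP.norm_pow_mul_tsum_mstep_mul_le hα0.le hC hf · x)

theorem abs_discountedValue_le (hP : IsStochasticWithJumpBound P jmp) (hα0 : 0 < α)
    (hα1 : α < 1) (hC : 0 ≤ C) (hf : ∀ y, |f y| ≤ C * (1 + ‖zToR y‖) ^ q) (x : Zd d) :
    |discountedValue P α f x| ≤
      C * (∑' t : ℕ, α ^ t * (1 + t * jmp) ^ q) * (1 + ‖zToR x‖) ^ q := by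
  have hmaj := ((summable_pow_mul_one_add_mul_pow hα0 hα1 hP.jmp_nonneg q).mul_left
    (C * (1 + ‖zToR x‖) ^ q)).hasSum
  rw [tsum_mul_left] at hmaj
  exact (tsum_of_norm_bounded hmaj (hP.norm_pow_mul_tsum_mstep_mul_le hα0.le hC hf · x)).trans_eq
    (by ring)

theorem tendsto_pow_mul_tsum_ofReal_mstep_mul (hP : IsStochasticWithJumpBound P jmp)
    (hα0 : 0 < α) (hα1 : α < 1) (hC : 0 ≤ C) (hf : ∀ y, |f y| ≤ C * (1 + ‖zToR y‖) ^ q) (x : Zd d) :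
    Tendsto (fun t : ℕ => ENNReal.ofReal α ^ t *
      ∑' y, ENNReal.ofReal (mstep P t x y) * ENNReal.ofReal |f y|) atTop (𝓝 0) := by
  have hlim := ((summable_pow_mul_one_add_mul_pow hα0 hα1 hP.jmp_nonneg q).mul_left
    (C * (1 + ‖zToR x‖) ^ q)).tendsto_atTop_zero
  refine tendsto_of_tendsto_of_tendsto_of_le_of_le tendsto_const_nhds
    (by simpa using ENNReal.tendsto_ofReal hlim) (fun _ => zero_le) fun t => ?_
  have hft : ∑' y, mstep P t x y * |f y| ≤ C * (1 + ‖zToR x‖) ^ q * (1 + t * jmp) ^ q :=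
    (le_abs_self _).trans <|
      hP.abs_tsum_mstep_mul_le hC (f := fun y => |f y|) (by simpa using hf) t x
  rw [tsum_ofReal_mul_ofReal (mstep_nonneg hP.nonneg t x) (fun _ => abs_nonneg _)
    (finite_support_mstep hP.finite_support t x), ← ENNReal.ofReal_pow hα0.le,
    ← ENNReal.ofReal_mul (by positivity)]
  refine ENNReal.ofReal_le_ofReal ?_
  calc α ^ t * ∑' y, mstep P t x y * |f y|
      ≤ α ^ t * (C * (1 + ‖zToR x‖) ^ q * (1 + t * jmp) ^ q) := by gcongr
    _ = _ := by ring

end IsStochasticWithJumpBound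

section Taylor

theorem abs_sub_sub_sub_div_two_le {φ φ' φ'' : ℝ → ℝ} {M : ℝ}
    (hφ : ∀ s, HasDerivAt φ (φ' s) s) (hφ' : ∀ s, HasDerivAt φ' (φ'' s) s)
    (hM : ∀ s ∈ Icc (0 : ℝ) 1, |φ'' s - φ'' 0| ≤ M) :
    |φ 1 - φ 0 - φ' 0 - φ'' 0 / 2| ≤ M := by
  have hG : ∀ s ∈ Icc (0 : ℝ) 1, |φ' s - φ' 0 - s * φ'' 0| ≤ M := by
    intro s hs
    have := norm_image_sub_le_of_norm_deriv_le_segment' (f := fun u => φ' u - u * φ'' 0)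
      (fun u _ => ((hφ' u).sub ((hasDerivAt_id u).mul_const _)).hasDerivWithinAt)
      (fun u hu => by simpa using hM u (Ico_subset_Icc_self hu)) s hs
    have hM0 : 0 ≤ M := (abs_nonneg _).trans (hM 0 (by simp))
    simp only [Real.norm_eq_abs, zero_mul, sub_zero] at this
    calc |φ' s - φ' 0 - s * φ'' 0| = |φ' s - s * φ'' 0 - φ' 0| := by ring_nf
      _ ≤ M * s := this
      _ ≤ M := mul_le_of_le_one_right hM0 hs.2
  have := norm_image_sub_le_of_norm_deriv_le_segment_01'
    (f := fun u => φ u - u * φ' 0 - u ^ 2 / 2 * φ'' 0) (f' := fun u => φ' u - φ' 0 - u * φ'' 0)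
    (fun u _ => by
      have := (((hφ u).sub ((hasDerivAt_id u).mul_const (φ' 0))).sub
        (((hasDerivAt_pow 2 u).div_const 2).mul_const (φ'' 0)))
      exact (this.congr_deriv (by norm_num)).hasDerivWithinAt)
    (fun u hu => by simpa [Real.norm_eq_abs] using hG u (Ico_subset_Icc_self hu))
  simp only [Real.norm_eq_abs] at this
  convert this using 2; ring

variable {E : Type*} [NormedAddCommGroup E] [NormedSpace ℝ E]

theorem hasDerivAt_comp_add_smul {F : Type*} [NormedAddCommGroup F] [NormedSpace ℝ F] {g : E → F}
    {x v : E} {s : ℝ} (hg : DifferentiableAt ℝ g (x + s • v)) :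
    HasDerivAt (fun u : ℝ => g (x + u • v)) (fderiv ℝ g (x + s • v) v) s := by
  have := hg.hasFDerivAt.comp_hasDerivAt s (((hasDerivAt_id s).smul_const v).const_add x)
  rwa [one_smul] at this

def taylorRemainderTwo (f : E → ℝ) (x v : E) : ℝ :=
  f (x + v) - f x - fderiv ℝ f x v - iteratedFDeriv ℝ 2 f x ![v, v] / 2

theorem abs_taylorRemainderTwo_le {f : E → ℝ} (hf : ContDiff ℝ 2 f) {x v : E} {K β : ℝ}
    (hK : 0 ≤ K) (hβ : 0 ≤ β)
    (hHol : ∀ s ∈ Icc (0 : ℝ) 1, ‖iteratedFDeriv ℝ 2 f (x + s • v) - iteratedFDeriv ℝ 2 f x‖ ≤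
      K * ‖s • v‖ ^ β) :
    |taylorRemainderTwo f x v| ≤ K * ‖v‖ ^ (2 + β) := by
  have hf1 : ContDiff ℝ 1 (fderiv ℝ f) := hf.fderiv_right (by norm_num)
  have hφ'' : ∀ s, HasDerivAt (fun u : ℝ => fderiv ℝ f (x + u • v) v)
      (iteratedFDeriv ℝ 2 f (x + s • v) ![v, v]) s := fun s => by
    rw [iteratedFDeriv_two_apply]
    exact (hasDerivAt_comp_add_smul (hf1.differentiable one_ne_zero _)).clm_apply
      (hasDerivAt_const s v)
      |>.congr_deriv (by simp)
  refine abs_sub_sub_sub_div_two_le (φ := fun u : ℝ => f (x + u • v))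
    (fun s => hasDerivAt_comp_add_smul (hf.differentiable (by norm_num) _)) hφ''
    (fun s hs => ?_) |>.trans_eq' (by simp [taylorRemainderTwo])
  have hv : ‖s • v‖ ≤ ‖v‖ := by
    rw [norm_smul, Real.norm_of_nonneg hs.1]; exact mul_le_of_le_one_left (norm_nonneg v) hs.2
  calc |iteratedFDeriv ℝ 2 f (x + s • v) ![v, v] - iteratedFDeriv ℝ 2 f (x + (0 : ℝ) • v) ![v, v]|
      = ‖(iteratedFDeriv ℝ 2 f (x + s • v) - iteratedFDeriv ℝ 2 f x) ![v, v]‖ := by simp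
    _ ≤ ‖iteratedFDeriv ℝ 2 f (x + s • v) - iteratedFDeriv ℝ 2 f x‖ * (‖v‖ * ‖v‖) := by
      simpa [Fin.prod_univ_two] using
        (iteratedFDeriv ℝ 2 f (x + s • v) - iteratedFDeriv ℝ 2 f x).le_opNorm ![v, v]
    _ ≤ K * ‖v‖ ^ β * ‖v‖ ^ 2 := by
      rw [← sq]; gcongr; exact (hHol s hs).trans (by gcongr)
    _ = K * ‖v‖ ^ (2 + β) := by
      rw [Real.rpow_add' (norm_nonneg v) (by positivity), Real.rpow_two]; ring

end Taylor

theorem norm_iteratedFDeriv_sub_le_hessHolder {d : ℕ} {β : ℝ} {f : EuclideanSpace ℝ (Fin d) → ℝ}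
    {Ω : Set (EuclideanSpace ℝ (Fin d))} (hΩ : hessHolder β f Ω ≠ ⊤)
    {y z : EuclideanSpace ℝ (Fin d)} (hy : y ∈ Ω) (hz : z ∈ Ω) :
    ‖iteratedFDeriv ℝ 2 f y - iteratedFDeriv ℝ 2 f z‖ ≤
      (hessHolder β f Ω).toReal * ‖y - z‖ ^ β := by
  rcases eq_or_ne y z with rfl | hyz
  · simp only [sub_self, norm_zero]; positivity
  have hle : ENNReal.ofReal (‖iteratedFDeriv ℝ 2 f y - iteratedFDeriv ℝ 2 f z‖ / ‖y - z‖ ^ β) ≤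
      hessHolder β f Ω :=
    le_iSup_of_le (⟨y, hy⟩ : Ω) <| le_iSup_of_le (⟨z, hz⟩ : Ω) <| le_iSup_of_le hyz le_rfl
  have := ENNReal.toReal_mono hΩ hle
  rwa [ENNReal.toReal_ofReal (by positivity),
    div_le_iff₀ (Real.rpow_pos_of_pos (norm_pos_iff.mpr (sub_ne_zero.mpr hyz)) β)] at this

theorem ofReal_abs_taylorRemainderTwo_le {d : ℕ} {β : ℝ} (hβ : 0 ≤ β)
    {f : EuclideanSpace ℝ (Fin d) → ℝ} (hf : ContDiff ℝ 2 f) {x v : EuclideanSpace ℝ (Fin d)}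
    {ρ : ℝ} (hv : ‖v‖ ≤ ρ) :
    ENNReal.ofReal |taylorRemainderTwo f x v| ≤
      hessHolder β f (Metric.closedBall x ρ) * ENNReal.ofReal (ρ ^ (2 + β)) := by
  -- `v = 0` is split off because `ρ` may then vanish, and `⊤ * 0 = 0`.
  rcases eq_or_ne v 0 with rfl | hv0
  · simp [taylorRemainderTwo, (iteratedFDeriv ℝ 2 f x).map_coord_zero (m := ![0, 0]) 0 rfl]
  have hρ : 0 < ρ := (norm_pos_iff.mpr hv0).trans_le hv
  by_cases htop : hessHolder β f (Metric.closedBall x ρ) = ⊤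
  · rw [htop, ENNReal.top_mul (by positivity)]
    exact le_top
  have hmem : ∀ s ∈ Icc (0 : ℝ) 1, x + s • v ∈ Metric.closedBall x ρ := fun s hs => by
    rw [Metric.mem_closedBall, dist_self_add_left, norm_smul, Real.norm_of_nonneg hs.1]
    exact (mul_le_of_le_one_left (norm_nonneg v) hs.2).trans hv
  calc ENNReal.ofReal |taylorRemainderTwo f x v|
      ≤ ENNReal.ofReal ((hessHolder β f (Metric.closedBall x ρ)).toReal * ‖v‖ ^ (2 + β)) := by
        refine ENNReal.ofReal_le_ofReal (abs_taylorRemainderTwo_le hf ENNReal.toReal_nonneg hβ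
          fun s hs => ?_)
        simpa using norm_iteratedFDeriv_sub_le_hessHolder htop (hmem s hs)
          (Metric.mem_closedBall_self hρ.le)
    _ ≤ ENNReal.ofReal ((hessHolder β f (Metric.closedBall x ρ)).toReal * ρ ^ (2 + β)) := by
        gcongr
    _ = _ := by rw [ENNReal.ofReal_mul ENNReal.toReal_nonneg, ENNReal.ofReal_toReal htop]

theorem iteratedFDeriv_two_apply_eq_sum_hessianEntry {d : ℕ} (f : EuclideanSpace ℝ (Fin d) → ℝ)
    (x v : EuclideanSpace ℝ (Fin d)) :
    iteratedFDeriv ℝ 2 f x ![v, v] = ∑ i, ∑ j, v i * v j * hessianEntry f x i j := by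
  simp only [hessianEntry, iteratedFDeriv_two_apply, Matrix.cons_val_zero, Matrix.cons_val_one]
  conv_lhs => rw [← (EuclideanSpace.basisFun (Fin d) ℝ).sum_repr v]
  simp only [map_sum, map_smul, FunLike.coe_sum, Finset.sum_apply, FunLike.coe_smul,
    Pi.smul_apply, smul_eq_mul, Finset.mul_sum]
  rw [Finset.sum_comm]
  simp [mul_assoc, mul_left_comm]

theorem hasSum_mul_taylorRemainderTwo {d : ℕ} {ι : Type*} {p : ι → ℝ}
    {u : ι → EuclideanSpace ℝ (Fin d)} {x₀ m : EuclideanSpace ℝ (Fin d)}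
    {S : Matrix (Fin d) (Fin d) ℝ} (f : EuclideanSpace ℝ (Fin d) → ℝ) (hp : HasSum p 1)
    (hpf : Summable fun y => p y * f (u y))
    (hm : ∀ i, HasSum (fun y => p y * (u y - x₀) i) (m i))
    (hS : ∀ i j, HasSum (fun y => p y * ((u y - x₀) i * (u y - x₀) j)) (S i j)) :
    HasSum (fun y => p y * taylorRemainderTwo f x₀ (u y - x₀))
      (∑' y, p y * f (u y) - f x₀ - fderiv ℝ f x₀ m -
        (∑ i, ∑ j, S i j * hessianEntry f x₀ i j) / 2) := by
  have hmean : HasSum (fun y => p y • (u y - x₀)) m :=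
    ((EuclideanSpace.equiv (Fin d) ℝ).hasSum (f := fun y => p y • (u y - x₀))).mp <|
      Pi.hasSum.mpr fun i => by simpa using hm i
  have hlin : HasSum (fun y => p y * fderiv ℝ f x₀ (u y - x₀)) (fderiv ℝ f x₀ m) := by
    simpa using hmean.mapL (fderiv ℝ f x₀)
  have hquad : HasSum (fun y => p y * iteratedFDeriv ℝ 2 f x₀ ![u y - x₀, u y - x₀] / 2)
      ((∑ i, ∑ j, S i j * hessianEntry f x₀ i j) / 2) := by
    refine HasSum.div_const ?_ 2
    simp_rw [iteratedFDeriv_two_apply_eq_sum_hessianEntry, Finset.mul_sum]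
    exact hasSum_sum fun i _ => hasSum_sum fun j _ => by
      simpa [mul_assoc] using (hS i j).mul_right (hessianEntry f x₀ i j)
  have h := ((hpf.hasSum.sub (hp.mul_right (f x₀))).sub hlin).sub hquad
  rw [one_mul] at h
  refine h.congr_fun fun y => ?_
  rw [taylorRemainderTwo, add_sub_cancel]
  ring

theorem IsStochasticWithJumpBound.ofReal_abs_sub_le_mul_tsum_add {d : ℕ} {P : Zd d → Zd d → ℝ}
    {jmp α β : ℝ} (hP : IsStochasticWithJumpBound P jmp) (hα0 : 0 ≤ α) (hα1 : α ≤ 1)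
    (hβ : 0 ≤ β) {Vh : EuclideanSpace ℝ (Fin d) → ℝ} (hVh : ContDiff ℝ 2 Vh) {V : Zd d → ℝ}
    {y : Zd d} {μ : EuclideanSpace ℝ (Fin d)} {σ2 : Matrix (Fin d) (Fin d) ℝ} {r : ℝ}
    (hμ : ∀ i, HasSum (fun z => P y z * (zToR z - zToR y) i) (μ i))
    (hσ2 : ∀ i j,
      HasSum (fun z => P y z * ((zToR z - zToR y) i * (zToR z - zToR y) j)) (σ2 i j))
    (hTCP : 0 = r + α * (fderiv ℝ Vh (zToR y) μ +
          (1 / 2) * ∑ i, ∑ j, σ2 i j * hessianEntry Vh (zToR y) i j) -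
        (1 - α) * Vh (zToR y))
    (hV : V y = r + α * ∑' z, P y z * V z) :
    ENNReal.ofReal |Vh (zToR y) - V y| ≤
      ENNReal.ofReal α * ∑' z, ENNReal.ofReal (P y z) * ENNReal.ofReal |Vh (zToR z) - V z| +
        ENNReal.ofReal (jmp ^ (2 + β)) * hessHolder β Vh (Metric.closedBall (zToR y) jmp) := by
  set R := fun z => taylorRemainderTwo Vh (zToR y) (zToR z - zToR y)
  have hfin := hP.finite_support y
  have hR := hasSum_mul_taylorRemainderTwo Vh (hP.hasSum_one y)
    (summable_mul_of_finite_support hfin _) hμ hσ2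
  have he : Vh (zToR y) - V y =
      α * (∑' z, P y z * (Vh (zToR z) - V z) - ∑' z, P y z * R z) := by
    simp_rw [mul_sub]
    rw [Summable.tsum_sub (summable_mul_of_finite_support hfin _)
      (summable_mul_of_finite_support hfin _), hR.tsum_eq]
    linear_combination hTCP - hV
  have hRle : ∑' z, ENNReal.ofReal (P y z) * ENNReal.ofReal |R z| ≤
      ENNReal.ofReal (jmp ^ (2 + β)) * hessHolder β Vh (Metric.closedBall (zToR y) jmp) := by
    calc ∑' z, ENNReal.ofReal (P y z) * ENNReal.ofReal |R z|
        ≤ ∑' z, ENNReal.ofReal (P y z) *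
            (hessHolder β Vh (Metric.closedBall (zToR y) jmp) * ENNReal.ofReal (jmp ^ (2 + β))) :=
          ENNReal.tsum_le_tsum fun z => by
            by_cases hz : P y z = 0
            · simp [hz]
            · gcongr; exact ofReal_abs_taylorRemainderTwo_le hβ hVh (hP.norm_sub_le hz)
      _ = _ := by
          rw [ENNReal.tsum_mul_right, ← ENNReal.ofReal_tsum_of_nonneg (hP.nonneg y)
            (hP.hasSum_one y).summable, (hP.hasSum_one y).tsum_eq, ENNReal.ofReal_one, one_mul,
            mul_comm]
  rw [he, abs_mul, abs_of_nonneg hα0, ENNReal.ofReal_mul hα0]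
  calc ENNReal.ofReal α *
        ENNReal.ofReal |∑' z, P y z * (Vh (zToR z) - V z) - ∑' z, P y z * R z|
      ≤ ENNReal.ofReal α *
          (∑' z, ENNReal.ofReal (P y z) * ENNReal.ofReal |Vh (zToR z) - V z| +
            ∑' z, ENNReal.ofReal (P y z) * ENNReal.ofReal |R z|) := by
        gcongr
        exact (ENNReal.ofReal_le_ofReal (abs_sub _ _)).trans <| ENNReal.ofReal_add_le.trans <|
          add_le_add (ofReal_abs_tsum_mul_le (hP.nonneg y) hfin _)
            (ofReal_abs_tsum_mul_le (hP.nonneg y) hfin _)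
    _ ≤ _ := by
        rw [mul_add]
        exact add_le_add le_rfl
          ((mul_le_of_le_one_left' (ENNReal.ofReal_le_one.mpr hα1)).trans hRle)

theorem tayloring_performance_bound_general
    (d : ℕ) (α β jmp : ℝ)
    (hα0 : 0 < α) (hα1 : α < 1) (hβ0 : 0 < β)
    (P : Zd d → Zd d → ℝ)
    (hP0 : ∀ x y, 0 ≤ P x y)
    (hPsum : ∀ x, HasSum (P x) 1)
    (hjump : ∀ x y, jmp < ‖zToR y - zToR x‖ → P x y = 0)
    (μ : Zd d → EuclideanSpace ℝ (Fin d))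
    (σ2 : Zd d → Matrix (Fin d) (Fin d) ℝ)
    (hμ : ∀ x i, HasSum (fun y => P x y * (zToR y - zToR x) i) (μ x i))
    (hσ2 : ∀ x i j,
      HasSum (fun y => P x y * ((zToR y - zToR x) i * (zToR y - zToR x) j)) (σ2 x i j))
    (r : Zd d → ℝ) (Γ : ℝ) (hΓ : 0 < Γ) (q : ℕ)
    (hr : ∀ x, |r x| ≤ Γ * (1 + ‖zToR x‖ ^ q))
    (V : Zd d → ℝ)
    (hV : ∀ x, V x = ∑' t : ℕ, α ^ t * ∑' y : Zd d, mstep P t x y * r y)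
    (Vh : EuclideanSpace ℝ (Fin d) → ℝ)
    (hVhC2 : ContDiff ℝ 2 Vh)
    (hVhbd : ∀ x : EuclideanSpace ℝ (Fin d), |Vh x| ≤ Γ * (1 + ‖x‖ ^ q))
    (hTCP : ∀ x : Zd d,
      0 = r x + α * (fderiv ℝ Vh (zToR x) (μ x) +
          (1 / 2) * ∑ i, ∑ j, σ2 x i j * hessianEntry Vh (zToR x) i j) -
        (1 - α) * Vh (zToR x))
    (x : Zd d) :
    ENNReal.ofReal |Vh (zToR x) - V x| ≤
      ENNReal.ofReal (jmp ^ (2 + β)) *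
        ∑' t : ℕ, ENNReal.ofReal (α ^ t) *
          ∑' y : Zd d, ENNReal.ofReal (mstep P t x y) *
            hessHolder β Vh (Metric.closedBall (zToR y) jmp) := by
  have hP : IsStochasticWithJumpBound P jmp := ⟨hP0, hPsum, hjump⟩
  have hC : 0 ≤ 2 * Γ := by positivity
  have hr' : ∀ y, |r y| ≤ 2 * Γ * (1 + ‖zToR y‖) ^ q := fun y =>
    (hr y).trans (mul_one_add_pow_le hΓ.le (norm_nonneg _) q)
  obtain rfl : V = discountedValue P α r := funext hV
  have hS : 0 ≤ ∑' t : ℕ, α ^ t * (1 + t * jmp) ^ q :=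
    tsum_nonneg fun t => mul_nonneg (by positivity) (pow_nonneg (by nlinarith [hP.jmp_nonneg]) q)
  have he : ∀ y, |Vh (zToR y) - discountedValue P α r y| ≤
      2 * Γ * (1 + ∑' t : ℕ, α ^ t * (1 + t * jmp) ^ q) * (1 + ‖zToR y‖) ^ q := fun y =>
    (abs_sub _ _).trans <|
      (add_le_add ((hVhbd _).trans (mul_one_add_pow_le hΓ.le (norm_nonneg _) q))
        (hP.abs_discountedValue_le hα0 hα1 hC hr' y)).trans_eq (by ring)
  have hstep := fun y => hP.ofReal_abs_sub_le_mul_tsum_add hα0.le hα1.le hβ0.le hVhC2 (hμ y)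
    (hσ2 y) (hTCP y) (discountedValue_eq_add_mul_tsum hP.finite_support
      (hP.summable_pow_mul_tsum_mstep_mul hα0 hα1 hC hr') y)
  have hmain := le_tsum_pow_mul_of_le_mul_add
    (tsum_ofReal_mstep_mul_le_of_le hP.finite_support hP.nonneg hstep · x)
    (hP.tendsto_pow_mul_tsum_ofReal_mstep_mul hα0 hα1 (by positivity) he x)
  rw [tsum_ofReal_mstep_zero_mul] at hmain
  refine hmain.trans_eq ?_
  simp_rw [ENNReal.ofReal_pow hα0.le, mul_left_comm _ (ENNReal.ofReal (jmp ^ (2 + β))),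
    ENNReal.tsum_mul_left, mul_left_comm _ (ENNReal.ofReal (jmp ^ (2 + β))),
    ENNReal.tsum_mul_left]

theorem tayloring_performance_bound
    (d : ℕ) (hd : 1 ≤ d) (α β jmp : ℝ)
    (hα0 : 0 < α) (hα1 : α < 1) (hβ0 : 0 < β) (hβ1 : β ≤ 1) (hjmp : 1 ≤ jmp)
    (P : Zd d → Zd d → ℝ)
    (hP0 : ∀ x y, 0 ≤ P x y) (hP1 : ∀ x y, P x y ≤ 1)
    (hPsum : ∀ x, HasSum (P x) 1)
    (hjump : ∀ x y, jmp < ‖zToR y - zToR x‖ → P x y = 0)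
    (μ : Zd d → EuclideanSpace ℝ (Fin d))
    (σ2 : Zd d → Matrix (Fin d) (Fin d) ℝ)
    (hμ : ∀ x i, HasSum (fun y => P x y * (zToR y - zToR x) i) (μ x i))
    (hσ2 : ∀ x i j,
      HasSum (fun y => P x y * ((zToR y - zToR x) i * (zToR y - zToR x) j)) (σ2 x i j))
    (r : Zd d → ℝ) (Γ : ℝ) (hΓ : 0 < Γ) (q : ℕ)
    (hr : ∀ x, |r x| ≤ Γ * (1 + ‖zToR x‖ ^ q))
    (V : Zd d → ℝ)
    (hV : ∀ x, V x = ∑' t : ℕ, α ^ t * ∑' y : Zd d, mstep P t x y * r y)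
    (Vh : EuclideanSpace ℝ (Fin d) → ℝ)
    (hVhC2 : ContDiff ℝ 2 Vh)
    (hVhbd : ∀ x : EuclideanSpace ℝ (Fin d), |Vh x| ≤ Γ * (1 + ‖x‖ ^ q))
    (hTCP : ∀ x : Zd d,
      0 = r x + α * (fderiv ℝ Vh (zToR x) (μ x) +
          (1 / 2) * ∑ i, ∑ j, σ2 x i j * hessianEntry Vh (zToR x) i j) -
        (1 - α) * Vh (zToR x))
    (x : Zd d) :
    ENNReal.ofReal |Vh (zToR x) - V x| ≤
      ENNReal.ofReal (jmp ^ (2 + β)) *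
        ∑' t : ℕ, ENNReal.ofReal (α ^ t) *
          ∑' y : Zd d, ENNReal.ofReal (mstep P t x y) *
            hessHolder β Vh (Metric.closedBall (zToR y) jmp) :=
  tayloring_performance_bound_general d α β jmp hα0 hα1 hβ0 P hP0 hPsum hjump μ σ2 hμ hσ2 r Γ hΓ q
    hr V hV Vh hVhC2 hVhbd hTCP x
end
end

section
/- Explicit solution of the Taylored equation for the discrete-time single-server queue in heavy traffic: Let 0 < λ < μ be real numbers with λ + μ = 1, and let α ∈ (0,1). Define γ₋ := (μ−λ) − √((μ−λ)² + 2(1−α)/α), c₁ := −1/((1−α)γ₋), and V̂(x) := −α(μ−λ)/(1−α)² + x/(1−α) + c₁·e^{γ₋ x}. Then γ₋ < 0, V̂'(0) = 0, and for every x ∈ ℝ, 0 = x + α( (λ−μ)·V̂'(x) + (1/2)·V̂''(x) ) − (1−α)·V̂(x). -/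
/-!
`γ₋` is the negative root of `(α/2) γ² - α(μ-λ) γ - (1-α) = 0`, the characteristic equation of the
homogeneous part of the Taylored equation, so every multiple of `e^{γ₋ x}` solves it; the affine
part of `V̂` is a particular solution, and `c₁` is chosen so that `V̂'(0) = 0`.
-/

noncomputable section

open Real

lemma sub_sqrt_sq_add_neg (d : ℝ) {k : ℝ} (hk : 0 < k) : d - √(d ^ 2 + k) < 0 := by
  have h : √(d ^ 2) < √(d ^ 2 + k) := sqrt_lt_sqrt (sq_nonneg d) (by linarith)
  rw [sqrt_sq_eq_abs] at h
  linarith [le_abs_self d]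

lemma sub_sqrt_sq_add_root (d : ℝ) {k : ℝ} (hk : 0 ≤ d ^ 2 + k) :
    (d - √(d ^ 2 + k)) ^ 2 - 2 * d * (d - √(d ^ 2 + k)) = k := by
  linear_combination sq_sqrt hk

lemma deriv_eq_of_affine_add_exp {f : ℝ → ℝ} {a b c γ : ℝ}
    (hf : ∀ x, f x = a + b * x + c * exp (γ * x)) :
    deriv f = fun x => b + c * γ * exp (γ * x) := by
  obtain rfl : f = fun x => a + b * x + c * exp (γ * x) := funext hf
  funext x
  have h : HasDerivAt (fun x => a + b * x + c * exp (γ * x))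
      (b * 1 + c * (exp (γ * x) * (γ * 1))) x :=
    (((hasDerivAt_id x).const_mul b).const_add a).add
      (((hasDerivAt_id x).const_mul γ).exp.const_mul c)
  rw [h.deriv]
  ring

lemma deriv_deriv_eq_of_affine_add_exp {f : ℝ → ℝ} {a b c γ : ℝ}
    (hf : ∀ x, f x = a + b * x + c * exp (γ * x)) :
    deriv (deriv f) = fun x => c * γ ^ 2 * exp (γ * x) := by
  rw [deriv_eq_of_affine_add_exp (a := b) (b := 0) (c := c * γ) (γ := γ)
    (fun x => by rw [deriv_eq_of_affine_add_exp hf]; ring)]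
  ring_nf

theorem heavy_traffic_taylored_solution_general
    (lam mu α : ℝ) (hα0 : 0 < α) (hα1 : α < 1)
    (γ c₁ : ℝ) (Vh : ℝ → ℝ)
    (hγ : γ = (mu - lam) - Real.sqrt ((mu - lam) ^ 2 + 2 * (1 - α) / α))
    (hc₁ : c₁ = -1 / ((1 - α) * γ))
    (hVh : ∀ x : ℝ, Vh x = -α * (mu - lam) / (1 - α) ^ 2 + x / (1 - α) +
      c₁ * Real.exp (γ * x)) :
    γ < 0 ∧ deriv Vh 0 = 0 ∧
      ∀ x : ℝ, 0 = x + α * ((lam - mu) * deriv Vh x + (1 / 2) * deriv (deriv Vh) x) -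
        (1 - α) * Vh x := by
  have h1α : 1 - α ≠ 0 := by linarith
  have hk : 0 < 2 * (1 - α) / α := div_pos (by linarith) hα0
  have hγneg : γ < 0 := hγ ▸ sub_sqrt_sq_add_neg _ hk
  have hroot : α * (γ ^ 2 - 2 * (mu - lam) * γ) = 2 * (1 - α) := by
    rw [hγ, sub_sqrt_sq_add_root _ (by positivity)]
    field_simp
  have hV : ∀ x, Vh x = -α * (mu - lam) / (1 - α) ^ 2 + (1 - α)⁻¹ * x + c₁ * exp (γ * x) :=
    fun x => by rw [hVh, div_eq_inv_mul x]
  rw [deriv_deriv_eq_of_affine_add_exp hV, deriv_eq_of_affine_add_exp hV]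
  beta_reduce
  refine ⟨hγneg, ?_, fun x => ?_⟩
  · rw [hc₁, mul_zero, exp_zero]
    field_simp [hγneg.ne]
    ring
  · rw [hVh x]
    set e := exp (γ * x)
    field_simp
    linear_combination (-(1 - α) * c₁ * e) * hroot

theorem heavy_traffic_taylored_solution
    (lam mu α : ℝ) (hlam : 0 < lam) (hlm : lam < mu) (hsum : lam + mu = 1)
    (hα0 : 0 < α) (hα1 : α < 1)
    (γ c₁ : ℝ) (Vh : ℝ → ℝ)
    (hγ : γ = (mu - lam) - Real.sqrt ((mu - lam) ^ 2 + 2 * (1 - α) / α))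
    (hc₁ : c₁ = -1 / ((1 - α) * γ))
    (hVh : ∀ x : ℝ, Vh x = -α * (mu - lam) / (1 - α) ^ 2 + x / (1 - α) +
      c₁ * Real.exp (γ * x)) :
    γ < 0 ∧ deriv Vh 0 = 0 ∧
      ∀ x : ℝ, 0 = x + α * ((lam - mu) * deriv Vh x + (1 / 2) * deriv (deriv Vh) x) -
        (1 - α) * Vh x :=
  heavy_traffic_taylored_solution_general lam mu α hα0 hα1 γ c₁ Vh hγ hc₁ hVh
end
end

section
/- Pathwise lower bound on the discounted k-th moment for bounded-jump paths (key step, eq. (interim), in Corollary 1): Let d ≥ 1, let k > 0 be a real number, and let 𝔧 ≥ 1 be a real number. There exists γ > 0, depending only on k and 𝔧, such that for every α ∈ [1/2, 1), every x ∈ ℝ^d with ‖x‖ ≥ 1/(1−α), and every sequence (x_t)_{t≥0} in ℝ^d with x₀ = x and ‖x_{t+1} − x_t‖ ≤ 𝔧 for all t ≥ 0, one has Σ_{t=0}^∞ α^t ‖x_t‖^k ≥ γ ‖x‖^k/(1−α); in particular Σ_{t=0}^∞ α^t ‖x_t‖^k ≥ γ/(1−α)^{k+1}. -/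
set_option maxHeartbeats 1000000


noncomputable section

theorem discounted_moment_pathwise_lower_bound
    (d : ℕ) (hd : 1 ≤ d) (k jmp : ℝ) (hk : 0 < k) (hjmp : 1 ≤ jmp) :
    ∃ γ : ℝ, 0 < γ ∧
      ∀ α : ℝ, 1 / 2 ≤ α → α < 1 →
      ∀ x : EuclideanSpace ℝ (Fin d), 1 / (1 - α) ≤ ‖x‖ →
      ∀ xs : ℕ → EuclideanSpace ℝ (Fin d), xs 0 = x →
      (∀ t : ℕ, ‖xs (t + 1) - xs t‖ ≤ jmp) →
      γ * ‖x‖ ^ k / (1 - α) ≤ (∑' t : ℕ, α ^ t * ‖xs t‖ ^ k) ∧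
      γ / (1 - α) ^ (k + 1) ≤ (∑' t : ℕ, α ^ t * ‖xs t‖ ^ k) := by
  have hjpos : (0:ℝ) < jmp := lt_of_lt_of_le one_pos hjmp
  set c : ℝ := 1 - Real.exp (-(1 / (2 * jmp))) with hcdef
  clear_value c
  have hcpos : 0 < c := by
    have h1 : Real.exp (-(1 / (2 * jmp))) < 1 := by
      rw [Real.exp_lt_one_iff]
      have : (0:ℝ) < 1 / (2 * jmp) := by positivity
      linarith
    rw [hcdef]; linarith
  have h2k : (0:ℝ) < (2:ℝ) ^ k := Real.rpow_pos_of_pos (by norm_num) k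
  refine ⟨c / (2:ℝ) ^ k, by positivity, ?_⟩
  intro α hα2 hα1 x hx xs hxs0 hjump
  have h1α : 0 < 1 - α := by linarith
  have hαpos : 0 < α := by linarith
  have hxpos : 0 < ‖x‖ := lt_of_lt_of_le (by positivity) hx
  -- path deviation bound
  have hdist : ∀ t : ℕ, ‖xs t - x‖ ≤ jmp * t := by
    intro t
    induction t with
    | zero => simp [hxs0]
    | succ n ih =>
      have h1 : ‖xs (n+1) - x‖ ≤ ‖xs (n+1) - xs n‖ + ‖xs n - x‖ :=
        norm_sub_le_norm_sub_add_norm_sub _ _ _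
      have h2 := hjump n
      push_cast
      calc ‖xs (n+1) - x‖ ≤ ‖xs (n+1) - xs n‖ + ‖xs n - x‖ := h1
        _ ≤ jmp + jmp * n := add_le_add h2 ih
        _ = jmp * (n + 1) := by ring
  have hlowb : ∀ t : ℕ, ‖x‖ - jmp * t ≤ ‖xs t‖ := by
    intro t
    have := norm_sub_norm_le x (xs t)
    have h2 : ‖x - xs t‖ = ‖xs t - x‖ := norm_sub_rev _ _
    have := hdist t
    linarith [norm_sub_norm_le x (xs t), h2 ▸ norm_sub_norm_le x (xs t)]
  have hupb : ∀ t : ℕ, ‖xs t‖ ≤ ‖x‖ + jmp * t := by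
    intro t
    have h1 : ‖xs t‖ ≤ ‖xs t - x‖ + ‖x‖ := by
      have := norm_add_le (xs t - x) x
      simpa using this
    have := hdist t
    linarith
  -- summability
  have habs : ‖α‖ < 1 := by rw [Real.norm_eq_abs, abs_of_pos hαpos]; exact hα1
  set n : ℕ := ⌈k⌉₊ with hndef
  clear_value n
  have hgeom : Summable (fun t : ℕ => (t:ℝ) ^ n * α ^ t) :=
    summable_pow_mul_geometric_of_norm_lt_one n habs
  have hgeom1 : Summable (fun t : ℕ => ((t:ℝ)+1) ^ n * α ^ t) := by
    have h1 : Summable (fun t : ℕ => (((t+1:ℕ)):ℝ) ^ n * α ^ (t+1)) :=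
      (summable_nat_add_iff (f := fun t : ℕ => (t:ℝ) ^ n * α ^ t) 1).mpr hgeom
    have h2 := h1.mul_left α⁻¹
    refine h2.congr fun t => ?_
    push_cast
    field_simp
    ring
  have hCpos : (0:ℝ) < (‖x‖ + jmp) ^ k := Real.rpow_pos_of_pos (by positivity) k
  have h0 : ∀ t : ℕ, (0:ℝ) ≤ α ^ t * ‖xs t‖ ^ k := fun t => by positivity
  have hle : ∀ t : ℕ, α ^ t * ‖xs t‖ ^ k ≤ (‖x‖ + jmp) ^ k * (((t:ℝ)+1) ^ n * α ^ t) := by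
    intro t
    have hxt : (0:ℝ) ≤ ‖xs t‖ := norm_nonneg _
    have h1 : ‖xs t‖ ^ k ≤ ((‖x‖ + jmp) * ((t:ℝ)+1)) ^ k := by
      apply Real.rpow_le_rpow hxt _ hk.le
      have := hupb t
      nlinarith [Nat.cast_nonneg (α := ℝ) t, hxpos]
    have h2 : ((‖x‖ + jmp) * ((t:ℝ)+1)) ^ k = (‖x‖ + jmp) ^ k * ((t:ℝ)+1) ^ k :=
      Real.mul_rpow (by positivity) (by positivity)
    have h3 : ((t:ℝ)+1) ^ k ≤ ((t:ℝ)+1) ^ (n:ℝ) :=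
      Real.rpow_le_rpow_of_exponent_le (by linarith [Nat.cast_nonneg (α := ℝ) t])
        (hndef ▸ Nat.le_ceil k)
    have h4 : ((t:ℝ)+1) ^ (n:ℝ) = ((t:ℝ)+1) ^ n := Real.rpow_natCast _ n
    have hα : (0:ℝ) ≤ α ^ t := by positivity
    calc α ^ t * ‖xs t‖ ^ k ≤ α ^ t * ((‖x‖ + jmp) ^ k * ((t:ℝ)+1) ^ n) := by
          apply mul_le_mul_of_nonneg_left _ hα
          rw [← h4]
          calc ‖xs t‖ ^ k ≤ ((‖x‖ + jmp) * ((t:ℝ)+1)) ^ k := h1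
            _ = (‖x‖ + jmp) ^ k * ((t:ℝ)+1) ^ k := h2
            _ ≤ (‖x‖ + jmp) ^ k * ((t:ℝ)+1) ^ (n:ℝ) :=
                mul_le_mul_of_nonneg_left h3 hCpos.le
      _ = (‖x‖ + jmp) ^ k * (((t:ℝ)+1) ^ n * α ^ t) := by ring
  have hsummable : Summable (fun t : ℕ => α ^ t * ‖xs t‖ ^ k) :=
    Summable.of_nonneg_of_le h0 hle (hgeom1.mul_left _)
  -- choose horizon N
  set a : ℝ := 1 / (2 * jmp * (1 - α)) with hadef
  clear_value a
  have hapos : 0 < a := by rw [hadef]; positivity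
  set N : ℕ := ⌈a⌉₊ with hNdef
  clear_value N
  have hja : jmp * a = 1 / (2 * (1 - α)) := by
    rw [hadef]; field_simp
  have hlow : ∀ t : ℕ, t < N → ‖x‖ / 2 ≤ ‖xs t‖ := by
    intro t ht
    have h1 : (t:ℝ) < a := by
      by_contra h
      push_neg at h
      have : N ≤ t := hNdef ▸ Nat.ceil_le.mpr h
      omega
    have h2 : jmp * t < jmp * a := by
      apply mul_lt_mul_of_pos_left h1 hjpos
    have hx' : 1 ≤ ‖x‖ * (1 - α) := (div_le_iff₀ h1α).mp hx
    have h3 : 1 / (2 * (1 - α)) ≤ ‖x‖ / 2 := by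
      rw [div_le_div_iff₀ (by positivity) two_pos]
      nlinarith
    have := hlowb t
    rw [hja] at h2
    linarith
  -- α^N bound
  have hαN : α ^ N ≤ Real.exp (-(1 / (2 * jmp))) := by
    have h1 : α ^ N = α ^ ((N:ℕ):ℝ) := (Real.rpow_natCast α N).symm
    have h2 : α ^ ((N:ℕ):ℝ) ≤ α ^ a :=
      Real.rpow_le_rpow_of_exponent_ge hαpos hα1.le (hNdef ▸ Nat.le_ceil a)
    have h3 : α ^ a = Real.exp (Real.log α * a) := Real.rpow_def_of_pos hαpos a
    have hlog : Real.log α ≤ α - 1 := by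
      have := Real.log_le_sub_one_of_pos hαpos
      linarith
    have h4 : Real.log α * a ≤ -(1 / (2 * jmp)) := by
      have h5 : Real.log α * a ≤ (α - 1) * a :=
        mul_le_mul_of_nonneg_right hlog hapos.le
      have h6 : (α - 1) * a = -(1 / (2 * jmp)) := by
        rw [hadef]; field_simp; ring
      linarith
    calc α ^ N = α ^ ((N:ℕ):ℝ) := h1
      _ ≤ α ^ a := h2
      _ = Real.exp (Real.log α * a) := h3
      _ ≤ Real.exp (-(1 / (2 * jmp))) := Real.exp_le_exp.mpr h4
  have hcN : c ≤ 1 - α ^ N := by rw [hcdef]; linarith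
  -- partial sum bound
  have hgeomsum : ∑ t ∈ Finset.range N, α ^ t = (1 - α ^ N) / (1 - α) := by
    rw [geom_sum_eq hα1.ne]
    rw [div_eq_div_iff (by linarith) (by linarith)]
    ring
  have hx2k : (‖x‖ / 2) ^ k = ‖x‖ ^ k / (2:ℝ) ^ k :=
    Real.div_rpow (norm_nonneg x) (by norm_num : (0:ℝ) ≤ 2) k
  have hsum : c / (2:ℝ) ^ k * ‖x‖ ^ k / (1 - α) ≤
      ∑ t ∈ Finset.range N, α ^ t * ‖xs t‖ ^ k := by
    have hstep : ∀ t ∈ Finset.range N, α ^ t * (‖x‖ / 2) ^ k ≤ α ^ t * ‖xs t‖ ^ k := by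
      intro t ht
      apply mul_le_mul_of_nonneg_left _ (by positivity)
      exact Real.rpow_le_rpow (by positivity) (hlow t (Finset.mem_range.mp ht)) hk.le
    calc c / (2:ℝ) ^ k * ‖x‖ ^ k / (1 - α)
        ≤ (1 - α ^ N) / (1 - α) * (‖x‖ / 2) ^ k := by
          have hkey : c / (2:ℝ) ^ k * ‖x‖ ^ k ≤ (1 - α ^ N) * (‖x‖ ^ k / (2:ℝ) ^ k) := by
            have h := mul_le_mul_of_nonneg_right hcN
              (by positivity : (0:ℝ) ≤ ‖x‖ ^ k / (2:ℝ) ^ k)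
            calc c / (2:ℝ) ^ k * ‖x‖ ^ k = c * (‖x‖ ^ k / (2:ℝ) ^ k) := by ring
              _ ≤ _ := h
          have heq : (1 - α ^ N) / (1 - α) * (‖x‖ ^ k / (2:ℝ) ^ k)
              = (1 - α ^ N) * (‖x‖ ^ k / (2:ℝ) ^ k) / (1 - α) := by ring
          rw [hx2k, heq]
          gcongr
      _ = ∑ t ∈ Finset.range N, α ^ t * (‖x‖ / 2) ^ k := by
          rw [← Finset.sum_mul, hgeomsum]
      _ ≤ ∑ t ∈ Finset.range N, α ^ t * ‖xs t‖ ^ k := Finset.sum_le_sum hstep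
  have htsum : ∑ t ∈ Finset.range N, α ^ t * ‖xs t‖ ^ k ≤ ∑' t : ℕ, α ^ t * ‖xs t‖ ^ k :=
    Summable.sum_le_tsum _ (fun t _ => by positivity) hsummable
  have hfirst : c / (2:ℝ) ^ k * ‖x‖ ^ k / (1 - α) ≤ ∑' t : ℕ, α ^ t * ‖xs t‖ ^ k :=
    le_trans hsum htsum
  refine ⟨hfirst, le_trans ?_ hfirst⟩
  -- second inequality
  have hxk : 0 < ‖x‖ ^ k := Real.rpow_pos_of_pos hxpos k
  have h1 : (1 - α) ^ (k + 1) = (1 - α) ^ k * (1 - α) := by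
    rw [Real.rpow_add h1α, Real.rpow_one]
  have h2 : (1 / (1 - α)) ^ k ≤ ‖x‖ ^ k :=
    Real.rpow_le_rpow (by positivity) hx hk.le
  have h3 : (1 / (1 - α)) ^ k = 1 / (1 - α) ^ k := by
    rw [Real.div_rpow zero_le_one h1α.le k, Real.one_rpow]
  have h4 : 0 < (1 - α) ^ k := Real.rpow_pos_of_pos h1α k
  rw [h1]
  rw [h3] at h2
  have hγ : 0 < c / (2:ℝ) ^ k := by positivity
  calc c / (2:ℝ) ^ k / ((1 - α) ^ k * (1 - α))
      = (c / (2:ℝ) ^ k) * (1 / (1 - α) ^ k) / (1 - α) := by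
        field_simp
    _ ≤ (c / (2:ℝ) ^ k) * ‖x‖ ^ k / (1 - α) := by
        gcongr
end
end

section
/- Pathwise comparison between discounted moments of order k−β and k (key step, eq. (interim), in Corollary 1): Let d ≥ 1, β ∈ (0,1], let k ≥ β be a real number, and let 𝔧 ≥ 1 be a real number. There exists Γ > 0, depending only on k, β and 𝔧, such that for every α ∈ [1/2, 1), every x ∈ ℝ^d with ‖x‖ ≥ 1/(1−α), and every sequence (x_t)_{t≥0} in ℝ^d with x₀ = x and ‖x_{t+1} − x_t‖ ≤ 𝔧 for all t ≥ 0, one has Σ_{t=0}^∞ α^t ‖x_t‖^{k−β} ≤ Γ (1−α)^β Σ_{t=0}^∞ α^t ‖x_t‖^k. -/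
noncomputable section

set_option maxHeartbeats 2000000 in
theorem discounted_moment_pathwise_comparison
    (d : ℕ) (hd : 1 ≤ d) (β k jmp : ℝ) (hβ0 : 0 < β) (hβ1 : β ≤ 1)
    (hk : β ≤ k) (hjmp : 1 ≤ jmp) :
    ∃ Γ : ℝ, 0 < Γ ∧
      ∀ α : ℝ, 1 / 2 ≤ α → α < 1 →
      ∀ x : EuclideanSpace ℝ (Fin d), 1 / (1 - α) ≤ ‖x‖ →
      ∀ xs : ℕ → EuclideanSpace ℝ (Fin d), xs 0 = x →
      (∀ t : ℕ, ‖xs (t + 1) - xs t‖ ≤ jmp) →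
      (∑' t : ℕ, α ^ t * ‖xs t‖ ^ (k - β)) ≤
        Γ * (1 - α) ^ β * ∑' t : ℕ, α ^ t * ‖xs t‖ ^ k := by
  have hjmp0 : (0:ℝ) < jmp := lt_of_lt_of_le one_pos hjmp
  set n : ℕ := max 1 ⌈k⌉₊ with hn_def
  have hn1 : 1 ≤ n := le_max_left _ _
  have hn1R : (1:ℝ) ≤ (n:ℝ) := by exact_mod_cast hn1
  have hkn : k ≤ (n:ℝ) := by
    calc k ≤ (⌈k⌉₊ : ℝ) := Nat.le_ceil k
      _ ≤ (n:ℝ) := by exact_mod_cast le_max_right 1 ⌈k⌉₊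
  set K : ℝ := jmp ^ n * (2 * (n:ℝ)) ^ n with hK_def
  have hKpos : 0 < K := by positivity
  refine ⟨8 * K * jmp * (2:ℝ) ^ k, by positivity, ?_⟩
  intro α hα2 hα1 x hx xs hxs0 hjump
  set u : ℝ := 1 - α with hu_def
  have hu0 : 0 < u := by simp only [hu_def]; linarith
  have hu2 : u ≤ 1/2 := by simp only [hu_def]; linarith
  have hα0 : 0 < α := by linarith
  have hxu : 1 / u ≤ ‖x‖ := hx
  have hux1 : 1 ≤ u * ‖x‖ := by
    have h := (div_le_iff₀ hu0).mp hxu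
    nlinarith
  have hxpos : (0:ℝ) < ‖x‖ := lt_of_lt_of_le (by positivity) hxu
  -- path bounds
  have hub : ∀ t : ℕ, ‖xs t‖ ≤ ‖x‖ + jmp * t := by
    intro t
    induction t with
    | zero => simp [hxs0]
    | succ t ih =>
      have h1 : ‖xs (t+1)‖ - ‖xs t‖ ≤ ‖xs (t+1) - xs t‖ := norm_sub_norm_le _ _
      have h2 := hjump t
      push_cast
      linarith
  have hlb : ∀ t : ℕ, ‖x‖ - jmp * t ≤ ‖xs t‖ := by
    intro t
    induction t with
    | zero => simp [hxs0]
    | succ t ih =>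
      have h1 : ‖xs t‖ - ‖xs (t+1)‖ ≤ ‖xs t - xs (t+1)‖ := norm_sub_norm_le _ _
      rw [norm_sub_rev] at h1
      have h2 := hjump t
      push_cast
      linarith
  -- geometric ratio r
  set r : ℝ := α * Real.exp (u/2) with hr_def
  have hr0 : 0 ≤ r := by positivity
  have hEpos := Real.exp_pos (u/2)
  have hr_le : r ≤ 1 - u/2 := by
    have h := Real.add_one_le_exp (-(u/2))
    rw [Real.exp_neg] at h
    -- h : -(u/2) + 1 ≤ (exp (u/2))⁻¹
    have hE : Real.exp (u/2) * (1 - u/2) ≤ 1 := by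
      calc Real.exp (u/2) * (1 - u/2) ≤ Real.exp (u/2) * (Real.exp (u/2))⁻¹ :=
            mul_le_mul_of_nonneg_left (by linarith) hEpos.le
        _ = 1 := mul_inv_cancel₀ hEpos.ne'
    have h12 : (0:ℝ) < 1 - u/2 := by linarith
    nlinarith [mul_pos hEpos h12, sq_nonneg u]
  have hr1 : r < 1 := lt_of_le_of_lt hr_le (by linarith)
  -- pointwise upper bound
  have key : ∀ e : ℝ, 0 ≤ e → e ≤ (n:ℝ) → ∀ t : ℕ,
      α ^ t * ‖xs t‖ ^ e ≤ (‖x‖ ^ e * K) * r ^ t := by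
    intro e he0 hen t
    have hxt0 : (0:ℝ) ≤ ‖xs t‖ := norm_nonneg _
    have hbase0 : (0:ℝ) < 1 + jmp * u * t := by positivity
    have hbase1 : (1:ℝ) ≤ 1 + jmp * u * t := by
      have h : (0:ℝ) ≤ jmp * u * t := by positivity
      linarith
    have hstep1 : ‖xs t‖ ≤ ‖x‖ * (1 + jmp * u * t) := by
      have h1 : jmp * t ≤ jmp * t * (u * ‖x‖) :=
        le_mul_of_one_le_right (by positivity) hux1
      have := hub t
      nlinarith
    have h2 : ‖xs t‖ ^ e ≤ (‖x‖ * (1 + jmp * u * t)) ^ e :=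
      Real.rpow_le_rpow hxt0 hstep1 he0
    have h3 : (‖x‖ * (1 + jmp * u * t)) ^ e = ‖x‖ ^ e * (1 + jmp * u * t) ^ e :=
      Real.mul_rpow hxpos.le hbase0.le
    have h4 : (1 + jmp * u * t) ^ e ≤ (1 + jmp * u * t) ^ (n:ℕ) := by
      rw [← Real.rpow_natCast (1 + jmp * u * t) n]
      exact Real.rpow_le_rpow_of_exponent_le hbase1 hen
    have h5 : (1 + jmp * u * t) ≤ jmp * (2 * (n:ℝ)) * Real.exp (u * t / (2 * n)) := by
      have hexp : 1 + u * t / (2 * n) ≤ Real.exp (u * t / (2 * n)) := by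
        have := Real.add_one_le_exp (u * t / (2 * n)); linarith
      have hA : 1 + jmp * u * t ≤ jmp * (2 * (n:ℝ)) * (1 + u * t / (2 * n)) := by
        have hut : (0:ℝ) ≤ u * t := by positivity
        have hnne : ((n:ℝ)) ≠ 0 := by positivity
        have hexpand : jmp * (2 * (n:ℝ)) * (1 + u * t / (2 * n)) =
            jmp * (2 * (n:ℝ)) + jmp * (u * t) := by
          field_simp
        rw [hexpand]
        have : (1:ℝ) ≤ jmp * (2 * (n:ℝ)) := by nlinarith
        nlinarith
      calc 1 + jmp * u * t ≤ jmp * (2 * (n:ℝ)) * (1 + u * t / (2 * n)) := hA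
        _ ≤ jmp * (2 * (n:ℝ)) * Real.exp (u * t / (2 * n)) := by
            apply mul_le_mul_of_nonneg_left hexp (by positivity)
    have h6 : (1 + jmp * u * t) ^ (n:ℕ) ≤
        (jmp * (2 * (n:ℝ)) * Real.exp (u * t / (2 * n))) ^ (n:ℕ) :=
      pow_le_pow_left₀ hbase0.le h5 n
    have h7 : (jmp * (2 * (n:ℝ)) * Real.exp (u * t / (2 * n))) ^ (n:ℕ) =
        K * Real.exp (u * t / 2) := by
      rw [mul_pow, mul_pow, ← Real.exp_nat_mul]
      have hne : (n:ℝ) ≠ 0 := by positivity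
      have : (n:ℝ) * (u * t / (2 * n)) = u * t / 2 := by field_simp
      rw [this, hK_def, mul_pow]
    have h8 : Real.exp (u * t / 2) = Real.exp (u/2) ^ t := by
      rw [← Real.exp_nat_mul]
      congr 1
      ring
    have hxe : (0:ℝ) ≤ ‖x‖ ^ e := Real.rpow_nonneg hxpos.le e
    calc α ^ t * ‖xs t‖ ^ e
        ≤ α ^ t * (‖x‖ ^ e * (K * Real.exp (u/2) ^ t)) := by
          apply mul_le_mul_of_nonneg_left _ (by positivity)
          calc ‖xs t‖ ^ e ≤ ‖x‖ ^ e * (1 + jmp * u * t) ^ e := by rw [← h3]; exact h2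
            _ ≤ ‖x‖ ^ e * (K * Real.exp (u/2) ^ t) := by
                apply mul_le_mul_of_nonneg_left _ hxe
                calc (1 + jmp * u * t) ^ e ≤ (1 + jmp * u * t) ^ (n:ℕ) := h4
                  _ ≤ K * Real.exp (u * t / 2) := h7 ▸ h6
                  _ = K * Real.exp (u/2) ^ t := by rw [h8]
      _ = (‖x‖ ^ e * K) * r ^ t := by rw [hr_def, mul_pow]; ring
  -- summability
  have hgeo : Summable (fun t : ℕ => (‖x‖ ^ (k - β) * K) * r ^ t) :=
    (summable_geometric_of_lt_one hr0 hr1).mul_left _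
  have hgeo2 : Summable (fun t : ℕ => (‖x‖ ^ k * K) * r ^ t) :=
    (summable_geometric_of_lt_one hr0 hr1).mul_left _
  have hsum1 : Summable (fun t : ℕ => α ^ t * ‖xs t‖ ^ (k - β)) := by
    apply Summable.of_nonneg_of_le (fun t => by positivity)
      (key (k - β) (by linarith) (by linarith)) hgeo
  have hsum2 : Summable (fun t : ℕ => α ^ t * ‖xs t‖ ^ k) := by
    apply Summable.of_nonneg_of_le (fun t => by positivity)
      (key k (by linarith) hkn) hgeo2
  -- upper bound on LHS
  have h1r : (1 - r)⁻¹ ≤ 2 / u := by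
    have h1 : u / 2 ≤ 1 - r := by linarith
    have h2 : (0:ℝ) < u / 2 := by linarith
    calc (1 - r)⁻¹ ≤ (u/2)⁻¹ := by
          apply inv_anti₀ h2 h1
      _ = 2 / u := by field_simp
  have hLHS : (∑' t : ℕ, α ^ t * ‖xs t‖ ^ (k - β)) ≤ (‖x‖ ^ (k - β) * K) * (2 / u) := by
    calc (∑' t : ℕ, α ^ t * ‖xs t‖ ^ (k - β))
        ≤ ∑' t : ℕ, (‖x‖ ^ (k - β) * K) * r ^ t :=
          Summable.tsum_le_tsum (key (k - β) (by linarith) (by linarith)) hsum1 hgeo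
      _ = (‖x‖ ^ (k - β) * K) * (1 - r)⁻¹ := by
          rw [tsum_mul_left, tsum_geometric_of_lt_one hr0 hr1]
      _ ≤ (‖x‖ ^ (k - β) * K) * (2 / u) := by
          apply mul_le_mul_of_nonneg_left h1r (by positivity)
  -- lower bound on RHS sum
  set T : ℕ := ⌊1 / (2 * jmp * u)⌋₊ with hT_def
  have hTle : (T:ℝ) ≤ 1 / (2 * jmp * u) := Nat.floor_le (by positivity)
  have hTgt : 1 / (2 * jmp * u) < (T:ℝ) + 1 := Nat.lt_floor_add_one _
  have hαT : (1:ℝ)/2 ≤ α ^ T := by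
    have hb := one_add_mul_le_pow (show (-2:ℝ) ≤ -u by linarith) T
    have : α ^ T = (1 + (-u)) ^ T := by rw [hu_def]; ring_nf
    rw [this]
    have hTu : (T:ℝ) * u ≤ 1/2 := by
      have h1 : (T:ℝ) * u ≤ (1 / (2 * jmp * u)) * u :=
        mul_le_mul_of_nonneg_right hTle hu0.le
      have h2 : (1 / (2 * jmp * u)) * u = 1 / (2 * jmp) := by
        field_simp
        all_goals ring
      have h3 : 1 / (2 * jmp) ≤ 1/2 := by
        rw [div_le_div_iff₀ (by positivity) (by norm_num)]; linarith
      linarith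
    nlinarith
  have hterm : ∀ t ∈ Finset.range (T + 1), α ^ T * (‖x‖ / 2) ^ k ≤ α ^ t * ‖xs t‖ ^ k := by
    intro t ht
    rw [Finset.mem_range] at ht
    have htT : t ≤ T := Nat.lt_succ_iff.mp ht
    have hαt : α ^ T ≤ α ^ t := pow_le_pow_of_le_one hα0.le hα1.le htT
    have hxt : ‖x‖ / 2 ≤ ‖xs t‖ := by
      have h1 : jmp * t ≤ jmp * T := by
        apply mul_le_mul_of_nonneg_left _ hjmp0.le
        exact_mod_cast htT
      have h2 : jmp * T ≤ jmp * (1 / (2 * jmp * u)) :=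
        mul_le_mul_of_nonneg_left hTle hjmp0.le
      have h3 : jmp * (1 / (2 * jmp * u)) = 1 / (2 * u) := by
        have he : (2:ℝ) * jmp * u = jmp * (2 * u) := by ring
        rw [he, one_div, mul_inv, ← mul_assoc, mul_inv_cancel₀ hjmp0.ne', one_mul, one_div]
      have h4 : 1 / (2 * u) ≤ ‖x‖ / 2 := by
        have hthis : 1 / (2 * u) = (1/u)/2 := by
          rw [div_div, mul_comm]
        rw [hthis]; linarith
      have := hlb t
      linarith
    have hxk : (‖x‖ / 2) ^ k ≤ ‖xs t‖ ^ k := Real.rpow_le_rpow (by positivity) hxt (by linarith)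
    exact mul_le_mul hαt hxk (by positivity) (by positivity)
  have hScard : ((T:ℝ) + 1) * (α ^ T * (‖x‖ / 2) ^ k) ≤
      ∑ t ∈ Finset.range (T + 1), α ^ t * ‖xs t‖ ^ k := by
    have := Finset.card_nsmul_le_sum (Finset.range (T + 1))
      (fun t => α ^ t * ‖xs t‖ ^ k) (α ^ T * (‖x‖ / 2) ^ k) hterm
    rw [Finset.card_range] at this
    calc ((T:ℝ) + 1) * (α ^ T * (‖x‖ / 2) ^ k)
        = (T + 1) • (α ^ T * (‖x‖ / 2) ^ k) := by
          rw [nsmul_eq_mul]; push_cast; ring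
      _ ≤ _ := this
  have hS : ‖x‖ ^ k / (4 * jmp * u * (2:ℝ) ^ k) ≤ ∑' t : ℕ, α ^ t * ‖xs t‖ ^ k := by
    have hsum_le : (∑ t ∈ Finset.range (T + 1), α ^ t * ‖xs t‖ ^ k) ≤
        ∑' t : ℕ, α ^ t * ‖xs t‖ ^ k :=
      Summable.sum_le_tsum _ (fun t _ => by positivity) hsum2
    have hdiv : (‖x‖ / 2) ^ k = ‖x‖ ^ k / (2:ℝ) ^ k :=
      Real.div_rpow hxpos.le (by norm_num) k
    have h2k : (0:ℝ) < (2:ℝ) ^ k := Real.rpow_pos_of_pos (by norm_num) k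
    have hxk0 : (0:ℝ) < ‖x‖ ^ k := Real.rpow_pos_of_pos hxpos k
    have hfin : ‖x‖ ^ k / (4 * jmp * u * (2:ℝ) ^ k) ≤
        ((T:ℝ) + 1) * (α ^ T * (‖x‖ / 2) ^ k) := by
      rw [hdiv]
      have hX : (0:ℝ) < ‖x‖ ^ k / (2:ℝ) ^ k := by positivity
      have hTα : 1 / (4 * jmp * u) ≤ ((T:ℝ) + 1) * α ^ T := by
        have hmm := mul_le_mul hTgt.le hαT (by norm_num) (by positivity)
        have heq : (1 / (2 * jmp * u)) * (1/2) = 1 / (4 * jmp * u) := by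
          rw [div_mul_div_comm, one_mul]
          congr 1
          ring
        rw [heq] at hmm
        exact hmm
      have hEq : ‖x‖ ^ k / (4 * jmp * u * (2:ℝ) ^ k) =
          (1 / (4 * jmp * u)) * (‖x‖ ^ k / (2:ℝ) ^ k) := by
        rw [div_mul_div_comm, one_mul]
      rw [hEq]
      calc (1 / (4 * jmp * u)) * (‖x‖ ^ k / (2:ℝ) ^ k)
          ≤ (((T:ℝ) + 1) * α ^ T) * (‖x‖ ^ k / (2:ℝ) ^ k) :=
            mul_le_mul_of_nonneg_right hTα hX.le
        _ = ((T:ℝ) + 1) * (α ^ T * (‖x‖ ^ k / (2:ℝ) ^ k)) := by ring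
    linarith
  -- combine
  have hxsplit : ‖x‖ ^ (k - β) ≤ ‖x‖ ^ k * u ^ β := by
    have h1 : ‖x‖ ^ (k - β) = ‖x‖ ^ k * ‖x‖ ^ (-β) := by
      rw [← Real.rpow_add hxpos]; ring_nf
    rw [h1]
    apply mul_le_mul_of_nonneg_left _ (Real.rpow_pos_of_pos hxpos k).le
    have h2 : (1/u) ^ β ≤ ‖x‖ ^ β := Real.rpow_le_rpow (by positivity) hxu hβ0.le
    have h3 : (1/u:ℝ) ^ β = (u ^ β)⁻¹ := by
      rw [one_div, Real.inv_rpow hu0.le]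
    rw [Real.rpow_neg hxpos.le]
    rw [h3] at h2
    have hub0 : (0:ℝ) < u ^ β := Real.rpow_pos_of_pos hu0 β
    calc (‖x‖ ^ β)⁻¹ ≤ ((u ^ β)⁻¹)⁻¹ := by
          apply inv_anti₀ (by positivity) h2
      _ = u ^ β := inv_inv _
  have h2k : (0:ℝ) < (2:ℝ) ^ k := Real.rpow_pos_of_pos (by norm_num) k
  have hub0 : (0:ℝ) < u ^ β := Real.rpow_pos_of_pos hu0 β
  calc (∑' t : ℕ, α ^ t * ‖xs t‖ ^ (k - β))
      ≤ (‖x‖ ^ (k - β) * K) * (2 / u) := hLHS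
    _ ≤ ((‖x‖ ^ k * u ^ β) * K) * (2 / u) := by
        apply mul_le_mul_of_nonneg_right
          (mul_le_mul_of_nonneg_right hxsplit hKpos.le) (by positivity)
    _ = (8 * K * jmp * (2:ℝ) ^ k) * u ^ β * (‖x‖ ^ k / (4 * jmp * u * (2:ℝ) ^ k)) := by
        field_simp
        ring
    _ ≤ (8 * K * jmp * (2:ℝ) ^ k) * u ^ β * ∑' t : ℕ, α ^ t * ‖xs t‖ ^ k := by
        apply mul_le_mul_of_nonneg_left hS (by positivity)
end
end

section
/- Pathwise lower bound used for order optimality (key step in Corollary 2): Let d ≥ 1, let p > 0 be a real number, and let 𝔧 ≥ 1 be a real number. There exists ν > 0, depending only on p and 𝔧, such that for every α ∈ (0,1), every x ∈ ℝ^d with ‖x‖ ≤ 1/(1−α), and every sequence (x_t)_{t≥0} in ℝ^d with x₀ = x and ‖x_{t+1} − x_t‖ ≤ 𝔧 for all t ≥ 0, one has Σ_{t=0}^∞ α^t ‖x_t‖^p ≥ ν ‖x‖^{p+1}. -/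
/-!
Write `X = ‖x₀‖`. Since the jumps are at most `j`, the first `X / (2j)` points of the path still
have norm at least `X / 2`; and since `X (1 - α) ≤ 1` and `j ≥ 1`, Bernoulli's inequality gives
`α ^ t ≥ 1 - t (1 - α) ≥ 1 / 2` for those `t`. Hence already the first `X / (2j)` terms of the
series add up to at least `X / (2j) · (X / 2) ^ p / 2 = X ^ (p + 1) / (2 ^ (p + 2) j)`.
-/

theorem norm_sub_le_nat_mul_of_norm_succ_sub_le {E : Type*} [SeminormedAddCommGroup E]
    {xs : ℕ → E} {C : ℝ} (h : ∀ t, ‖xs (t + 1) - xs t‖ ≤ C) : ∀ n : ℕ, ‖xs n - xs 0‖ ≤ n * C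
  | 0 => by simp
  | n + 1 =>
    calc ‖xs (n + 1) - xs 0‖ ≤ ‖xs (n + 1) - xs n‖ + ‖xs n - xs 0‖ :=
          norm_sub_le_norm_sub_add_norm_sub _ _ _
      _ ≤ C + n * C := add_le_add (h n) (norm_sub_le_nat_mul_of_norm_succ_sub_le h n)
      _ = (n + 1 : ℕ) * C := by push_cast; ring

theorem summable_pow_mul_rpow_of_le_mul_nat {r p c : ℝ} {g : ℕ → ℝ} (hr0 : 0 ≤ r) (hr1 : r < 1)
    (hp : 0 ≤ p) (hg0 : ∀ t, 0 ≤ g t) (hg : ∀ t : ℕ, 1 ≤ t → g t ≤ c * t) :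
    Summable fun t ↦ r ^ t * g t ^ p := by
  have hc : 0 ≤ c := by simpa using (hg0 1).trans (hg 1 le_rfl)
  have hr : ‖r‖ < 1 := by rwa [Real.norm_of_nonneg hr0]
  refine Summable.of_norm_bounded_eventually_nat
    ((summable_pow_mul_geometric_of_norm_lt_one ⌈p⌉₊ hr).mul_left (c ^ p)) ?_
  filter_upwards [Filter.eventually_ge_atTop 1] with t ht
  have ht' : (1 : ℝ) ≤ t := by exact_mod_cast ht
  rw [Real.norm_of_nonneg (mul_nonneg (pow_nonneg hr0 t) (Real.rpow_nonneg (hg0 t) p))]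
  calc r ^ t * g t ^ p ≤ r ^ t * (c * t) ^ p := by gcongr; exacts [hg0 t, hg t ht]
    _ = c ^ p * ((t : ℝ) ^ p * r ^ t) := by rw [Real.mul_rpow hc t.cast_nonneg]; ring
    _ ≤ c ^ p * ((t : ℝ) ^ ⌈p⌉₊ * r ^ t) := by
      gcongr
      rw [← Real.rpow_natCast]
      exact Real.rpow_le_rpow_of_exponent_le ht' (Nat.le_ceil p)

theorem half_le_pow_of_nat_mul_one_sub_le {α : ℝ} {t : ℕ} (hα : 0 ≤ α)
    (ht : t * (1 - α) ≤ 1 / 2) : 1 / 2 ≤ α ^ t := by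
  have bernoulli := one_add_mul_le_pow (a := α - 1) (by linarith) t
  rw [add_sub_cancel] at bernoulli
  linarith

theorem nat_mul_le_tsum_of_le {f : ℕ → ℝ} (hf : Summable f) (hf0 : ∀ t, 0 ≤ f t) {N : ℕ} {c : ℝ}
    (h : ∀ t < N, c ≤ f t) : N * c ≤ ∑' t, f t :=
  calc (N : ℝ) * c = (Finset.range N).card • c := by simp
    _ ≤ ∑ t ∈ Finset.range N, f t :=
      Finset.card_nsmul_le_sum _ _ _ fun t ht ↦ h t (Finset.mem_range.mp ht)
    _ ≤ ∑' t, f t := hf.sum_le_tsum _ fun t _ ↦ hf0 t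

section JumpBounded

variable {E : Type*} [SeminormedAddCommGroup E] {xs : ℕ → E} {α p j : ℝ}

theorem half_mul_rpow_half_le_pow_mul_rpow_norm (hα0 : 0 ≤ α) (hα1 : α ≤ 1) (hp : 0 ≤ p)
    (hj : 1 ≤ j) (hjump : ∀ t, ‖xs (t + 1) - xs t‖ ≤ j) (hx : ‖xs 0‖ * (1 - α) ≤ 1) {t : ℕ}
    (ht : 2 * t * j ≤ ‖xs 0‖) : 1 / 2 * (‖xs 0‖ / 2) ^ p ≤ α ^ t * ‖xs t‖ ^ p := by
  have hdisc : 1 / 2 ≤ α ^ t := by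
    refine half_le_pow_of_nat_mul_one_sub_le hα0 ?_
    have : 0 ≤ (t : ℝ) * (1 - α) := mul_nonneg t.cast_nonneg (by linarith)
    nlinarith
  have hnorm : ‖xs 0‖ / 2 ≤ ‖xs t‖ := by
    have := norm_sub_norm_le (xs 0) (xs t)
    rw [norm_sub_rev] at this
    linarith [norm_sub_le_nat_mul_of_norm_succ_sub_le hjump t]
  exact mul_le_mul hdisc (Real.rpow_le_rpow (by positivity) hnorm hp) (by positivity)
    (pow_nonneg hα0 t)

theorem rpow_norm_div_le_tsum_pow_mul_rpow_norm (hα0 : 0 ≤ α) (hα1 : α < 1) (hp : 0 ≤ p)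
    (hj : 1 ≤ j) (hjump : ∀ t, ‖xs (t + 1) - xs t‖ ≤ j) (hx : ‖xs 0‖ * (1 - α) ≤ 1) :
    ‖xs 0‖ ^ (p + 1) / (2 ^ (p + 2) * j) ≤ ∑' t, α ^ t * ‖xs t‖ ^ p := by
  set X := ‖xs 0‖
  have hj0 : 0 < j := by linarith
  have hf0 : ∀ t, 0 ≤ α ^ t * ‖xs t‖ ^ p := fun t ↦ by positivity
  have hsum : Summable fun t ↦ α ^ t * ‖xs t‖ ^ p := by
    refine summable_pow_mul_rpow_of_le_mul_nat (c := X + j) hα0 hα1 hp (fun _ ↦ norm_nonneg _)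
      fun t ht ↦ ?_
    have ht' : (1 : ℝ) ≤ t := by exact_mod_cast ht
    have := norm_le_norm_add_norm_sub' (xs t) (xs 0)
    nlinarith [norm_sub_le_nat_mul_of_norm_succ_sub_le hjump t, norm_nonneg (xs 0)]
  rcases (show 0 ≤ X from norm_nonneg _).eq_or_lt with hX0 | hX0
  · rw [← hX0, Real.zero_rpow (by linarith), zero_div]
    exact tsum_nonneg hf0
  have hfloor : ∀ t < ⌊X / (2 * j)⌋₊ + 1, 2 * t * j ≤ X := fun t ht ↦ by
    have := (Nat.le_floor_iff (by positivity)).mp (Nat.lt_succ_iff.mp ht)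
    rw [le_div_iff₀ (by positivity)] at this
    linarith
  calc X ^ (p + 1) / (2 ^ (p + 2) * j) = X / (2 * j) * (1 / 2 * (X / 2) ^ p) := by
        rw [Real.rpow_add_one hX0.ne', Real.div_rpow hX0.le zero_le_two,
          Real.rpow_add zero_lt_two, Real.rpow_two]
        field_simp
    _ ≤ (⌊X / (2 * j)⌋₊ + 1 : ℕ) * (1 / 2 * (X / 2) ^ p) := by
        gcongr
        push_cast
        exact (Nat.lt_floor_add_one _).le
    _ ≤ ∑' t, α ^ t * ‖xs t‖ ^ p := nat_mul_le_tsum_of_le hsum hf0 fun t ht ↦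
        half_mul_rpow_half_le_pow_mul_rpow_norm hα0 hα1.le hp hj hjump hx (hfloor t ht)

end JumpBounded

theorem discounted_moment_pathwise_lower_bound_order_optimality_general
    (d : ℕ) (p jmp : ℝ) (hp : 0 < p) (hjmp : 1 ≤ jmp) :
    ∃ ν : ℝ, 0 < ν ∧
      ∀ α : ℝ, 0 < α → α < 1 →
      ∀ x : EuclideanSpace ℝ (Fin d), ‖x‖ ≤ 1 / (1 - α) →
      ∀ xs : ℕ → EuclideanSpace ℝ (Fin d), xs 0 = x →
      (∀ t : ℕ, ‖xs (t + 1) - xs t‖ ≤ jmp) →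
      ν * ‖x‖ ^ (p + 1) ≤ (∑' t : ℕ, α ^ t * ‖xs t‖ ^ p) := by
  refine ⟨1 / (2 ^ (p + 2) * jmp), by positivity, fun α hα0 hα1 x hx xs hxs0 hjump ↦ ?_⟩
  subst hxs0
  rw [one_div_mul_eq_div]
  refine rpow_norm_div_le_tsum_pow_mul_rpow_norm hα0.le hα1 hp.le hjmp hjump ?_
  rwa [le_div_iff₀ (by linarith)] at hx

theorem discounted_moment_pathwise_lower_bound_order_optimality
    (d : ℕ) (hd : 1 ≤ d) (p jmp : ℝ) (hp : 0 < p) (hjmp : 1 ≤ jmp) :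
    ∃ ν : ℝ, 0 < ν ∧
      ∀ α : ℝ, 0 < α → α < 1 →
      ∀ x : EuclideanSpace ℝ (Fin d), ‖x‖ ≤ 1 / (1 - α) →
      ∀ xs : ℕ → EuclideanSpace ℝ (Fin d), xs 0 = x →
      (∀ t : ℕ, ‖xs (t + 1) - xs t‖ ≤ jmp) →
      ν * ‖x‖ ^ (p + 1) ≤ (∑' t : ℕ, α ^ t * ‖xs t‖ ^ p) :=
  discounted_moment_pathwise_lower_bound_order_optimality_general d p jmp hp hjmp
end
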